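/- arXiv:2506.05192 — 8 statements merged into one kernel-verified Lean document; each statement's English description precedes it below -/
import Mathlib

section
/- For a reachability objective ◊F with optimistic backward responsibility: if (C, s) is a switching pair for some coalition C ⊆ S, then (∅, s) is also a switching pair, i.e., s is winning on its own. -/
/-- The engraving construction: all transitions of states on the run `ρ` that are not
in the coalition `C` are removed, except the one following `ρ`. -/
def Engrave {S : Type*} (tr : S → S → Prop) (ρ : ℕ → S) (C : Set S) : S → S → Prop :=
  fun s t => (tr s t ∧ ¬(s ∈ Set.range ρ ∧ s ∉ C)) ∨ ∃ i, ρ i = s ∧ ρ (i + 1) = t ∧ s ∉ C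

/-- Player Sat (with positional strategies, controlling the states in `C`)
wins the game on arena `tr` with objective `Ω` from state `init`. -/
def Wins {S : Type*} (tr : S → S → Prop) (C : Set S) (Ω : (ℕ → S) → Prop) (init : S) : Prop :=
  ∃ σ : S → S, (∀ s, tr s (σ s)) ∧
    ∀ π : ℕ → S, π 0 = init →
      (∀ i, tr (π i) (π (i + 1)) ∧ (π i ∈ C → π (i + 1) = σ (π i))) → Ω π

/-- A run is simple lasso-shaped. -/
def SimpleLasso {S : Type*} (ρ : ℕ → S) : Prop :=
  ∃ k ℓ : ℕ, 0 < ℓ ∧ (∀ i, k ≤ i → ρ (i + ℓ) = ρ i) ∧ Set.InjOn ρ (Set.Iio (k + ℓ))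

def SafetyObj {S : Type*} (F : Set S) : (ℕ → S) → Prop := fun π => ∀ i, π i ∉ F

def ReachObj {S : Type*} (F : Set S) : (ℕ → S) → Prop := fun π => ∃ i, π i ∈ F

def BuchiObj {S : Type*} (F : Set S) : (ℕ → S) → Prop := fun π => ∀ i, ∃ j, i ≤ j ∧ π j ∈ F

/-- successors along a simple lasso are unique -/
lemma RespAux.lasso_det {S : Type*} {ρ : ℕ → S} (h : SimpleLasso ρ) :
    ∀ {i j : ℕ}, ρ i = ρ j → ρ (i + 1) = ρ (j + 1) := by
  obtain ⟨k, ℓ, hℓ, hper, hinj⟩ := h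
  have reduce : ∀ i : ℕ, ∃ i' , i' < k + ℓ ∧ ρ i' = ρ i ∧ ρ (i' + 1) = ρ (i + 1) := by
    intro i
    induction i using Nat.strong_induction_on with
    | _ i ih =>
      by_cases hi : i < k + ℓ
      · exact ⟨i, hi, rfl, rfl⟩
      · push_neg at hi
        have h2 : i - ℓ + ℓ = i := by omega
        have e1 : ρ (i - ℓ) = ρ i := by
          conv_rhs => rw [← h2]
          exact (hper _ (by omega)).symm
        have e2 : ρ (i - ℓ + 1) = ρ (i + 1) := by
          have := hper (i - ℓ + 1) (by omega)
          rw [show i - ℓ + 1 + ℓ = i + 1 by omega] at this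
          exact this.symm
        obtain ⟨i', h1, h2', h3⟩ := ih (i - ℓ) (by omega)
        exact ⟨i', h1, h2'.trans e1, h3.trans e2⟩
  intro i j hij
  obtain ⟨i', hi1, hi2, hi3⟩ := reduce i
  obtain ⟨j', hj1, hj2, hj3⟩ := reduce j
  have : i' = j' := hinj (Set.mem_Iio.2 hi1) (Set.mem_Iio.2 hj1) (by rw [hi2, hj2, hij])
  rw [← hi3, ← hj3, this]

lemma RespAux.engrave_total {S : Type*} {tr : S → S → Prop} (htotal : ∀ s, ∃ t, tr s t)
    (ρ : ℕ → S) (D : Set S) (x : S) : ∃ t, Engrave tr ρ D x t := by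
  by_cases hx : x ∈ Set.range ρ ∧ x ∉ D
  · obtain ⟨i, hi⟩ := hx.1
    exact ⟨ρ (i + 1), Or.inr ⟨i, hi, rfl, hx.2⟩⟩
  · obtain ⟨t, ht⟩ := htotal x
    exact ⟨t, Or.inl ⟨ht, hx⟩⟩

lemma RespAux.engrave_det {S : Type*} {tr : S → S → Prop} {ρ : ℕ → S}
    (hlasso : SimpleLasso ρ) {D : Set S} {x : S}
    (hx : x ∈ Set.range ρ) (hxD : x ∉ D) {t t' : S}
    (h1 : Engrave tr ρ D x t) (h2 : Engrave tr ρ D x t') : t = t' := by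
  rcases h1 with ⟨_, hn⟩ | ⟨i, hi, hti, _⟩
  · exact absurd ⟨hx, hxD⟩ hn
  rcases h2 with ⟨_, hn⟩ | ⟨j, hj, htj, _⟩
  · exact absurd ⟨hx, hxD⟩ hn
  rw [← hti, ← htj]
  exact RespAux.lasso_det hlasso (hi.trans hj.symm)

/-- n-step reachability of F -/
def RespAux.steps {S : Type*} (E : S → S → Prop) (F : Set S) : ℕ → S → Prop
  | 0, x => x ∈ F
  | n + 1, x => ∃ y, E x y ∧ RespAux.steps E F n y

lemma RespAux.steps_of_rtg {S : Type*} {E : S → S → Prop} {F : Set S} {x f : S}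
    (h : Relation.ReflTransGen E x f) (hf : f ∈ F) : ∃ n, RespAux.steps E F n x := by
  induction h using Relation.ReflTransGen.head_induction_on with
  | refl => exact ⟨0, hf⟩
  | head h' _ ih => obtain ⟨n, hn⟩ := ih; exact ⟨n + 1, _, h', hn⟩

lemma RespAux.rank_step {S : Type*} {E : S → S → Prop} {F : Set S} {x : S}
    (hx : ∃ n, RespAux.steps E F n x) (hxF : x ∉ F) :
    ∃ y, E x y ∧ ∀ n, RespAux.steps E F n x → ∃ m, m < n ∧ RespAux.steps E F m y := by
  classical
  have hspec := Nat.find_spec hx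
  rcases hN : Nat.find hx with _ | m
  · rw [hN] at hspec; exact absurd hspec hxF
  · rw [hN] at hspec
    obtain ⟨y, hxy, hy⟩ := hspec
    refine ⟨y, hxy, fun n hn => ⟨m, ?_, hy⟩⟩
    have h3 : Nat.find hx ≤ n := Nat.find_le hn
    omega

/-- In an engraved game (opponent deterministic), reachability implies winning. -/
lemma RespAux.wins_of_reach {S : Type*} {tr : S → S → Prop} (htotal : ∀ s, ∃ t, tr s t)
    {ρ : ℕ → S} (hlasso : SimpleLasso ρ) {D : Set S} {F : Set S} {init : S}
    (h : ∃ f ∈ F, Relation.ReflTransGen (Engrave tr ρ D) init f) :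
    Wins (Engrave tr ρ D) (D ∪ {t | t ∉ Set.range ρ}) (ReachObj F) init := by
  classical
  set E := Engrave tr ρ D with hE
  obtain ⟨f, hf, hpath⟩ := h
  refine ⟨fun x => if hx : (∃ n, RespAux.steps E F n x) ∧ x ∉ F
      then Classical.choose (RespAux.rank_step hx.1 hx.2)
      else Classical.choose (RespAux.engrave_total htotal ρ D x), ?_, ?_⟩
  · intro x
    beta_reduce
    by_cases hx : (∃ n, RespAux.steps E F n x) ∧ x ∉ F
    · rw [dif_pos hx]; exact (Classical.choose_spec (RespAux.rank_step hx.1 hx.2)).1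
    · rw [dif_neg hx]; exact Classical.choose_spec (RespAux.engrave_total htotal ρ D x)
  · intro π hπ0 hπ
    have key : ∀ n, ∀ i, RespAux.steps E F n (π i) → ∃ j, π j ∈ F := by
      intro n
      induction n using Nat.strong_induction_on with
      | _ n ih =>
        intro i hsteps
        by_cases hF : π i ∈ F
        · exact ⟨i, hF⟩
        have hx : (∃ n, RespAux.steps E F n (π i)) ∧ π i ∉ F := ⟨⟨n, hsteps⟩, hF⟩
        obtain ⟨hEy, hy⟩ := Classical.choose_spec (RespAux.rank_step hx.1 hx.2)
        obtain ⟨m, hmn, hm⟩ := hy n hsteps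
        have hnext : RespAux.steps E F m (π (i + 1)) := by
          by_cases hK : π i ∈ D ∪ {t | t ∉ Set.range ρ}
          · have h5 := (hπ i).2 hK
            beta_reduce at h5
            rw [h5, dif_pos hx]
            exact hm
          · have h1 : π i ∈ Set.range ρ := by
              by_contra hcon
              exact hK (Or.inr hcon)
            have h2 : π i ∉ D := fun hcon => hK (Or.inl hcon)
            have := RespAux.engrave_det hlasso h1 h2 ((hπ i).1 : E (π i) (π (i+1))) hEy
            rw [this]; exact hm
        exact ih m hmn (i + 1) hnext
    obtain ⟨n, hn⟩ := RespAux.steps_of_rtg hpath hf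
    exact key n 0 (by rwa [hπ0])

lemma RespAux.reach_of_wins {S : Type*} {E : S → S → Prop} {K : Set S} {F : Set S} {init : S}
    (h : Wins E K (ReachObj F) init) : ∃ f ∈ F, Relation.ReflTransGen E init f := by
  obtain ⟨σ, hleg, hplay⟩ := h
  have hplay' := hplay (fun n => σ^[n] init) rfl (by
    intro i
    constructor
    · show E _ (σ^[i+1] init)
      rw [Function.iterate_succ_apply']; exact hleg _
    · intro _; show σ^[i+1] init = _
      rw [Function.iterate_succ_apply'])
  obtain ⟨N, hN⟩ := hplay'
  refine ⟨σ^[N] init, hN, ?_⟩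
  clear hN
  induction N with
  | zero => exact Relation.ReflTransGen.refl
  | succ N ih =>
    rw [Function.iterate_succ_apply']
    exact ih.tail (hleg _)

/-- the run itself is a path in any engraved system -/
lemma RespAux.run_reach {S : Type*} {tr : S → S → Prop} {ρ : ℕ → S}
    (hrun : ∀ i, tr (ρ i) (ρ (i + 1))) (D : Set S) :
    ∀ i, Relation.ReflTransGen (Engrave tr ρ D) (ρ 0) (ρ i) := by
  intro i
  induction i with
  | zero => exact Relation.ReflTransGen.refl
  | succ i ih =>
    refine ih.tail ?_
    by_cases hi : ρ i ∈ D
    · exact Or.inl ⟨hrun i, fun h => h.2 hi⟩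
    · exact Or.inr ⟨i, rfl, rfl, hi⟩

/-- For reachability objectives in the optimistic backward-responsibility setting:
if `(C, s)` is a switching pair, then `(∅, s)` is a switching pair, i.e. `s` is
winning on its own. -/
theorem reach_optimistic_switching_implies_singleton {S : Type*} [Fintype S]
    (tr : S → S → Prop) (htotal : ∀ s, ∃ t, tr s t)
    (init : S) (F : Set S) (ρ : ℕ → S)
    (hrun0 : ρ 0 = init) (hrun : ∀ i, tr (ρ i) (ρ (i + 1)))
    (hlasso : SimpleLasso ρ) (hviol : ∀ i, ρ i ∉ F)
    (C : Set S) (s : S) (hs : s ∉ C)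
    (hwin : Wins (Engrave tr ρ (C ∪ {s})) ((C ∪ {s}) ∪ {t | t ∉ Set.range ρ})
      (ReachObj F) init)
    (hlose : ¬Wins (Engrave tr ρ C) (C ∪ {t | t ∉ Set.range ρ}) (ReachObj F) init) :
    Wins (Engrave tr ρ {s}) (({s} : Set S) ∪ {t | t ∉ Set.range ρ}) (ReachObj F) init ∧
    ¬Wins (Engrave tr ρ (∅ : Set S)) ((∅ : Set S) ∪ {t | t ∉ Set.range ρ})
      (ReachObj F) init := by
  constructor
  · -- (∅, s) is winning side: Sat wins the game for coalition {s}
    obtain ⟨f, hf, P⟩ := RespAux.reach_of_wins hwin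
    have cls : ∀ y z, Engrave tr ρ (C ∪ {s}) y z → ¬ Engrave tr ρ C y z →
        y = s ∧ s ∈ Set.range ρ ∧ tr s z := by
      intro y z h1 h2
      rcases h1 with ⟨htr, hn⟩ | ⟨i, hi, hz, hyn⟩
      · by_cases hy : y ∈ Set.range ρ ∧ y ∉ C
        · have hy2 : y ∈ C ∪ {s} := by
            by_contra hc; exact hn ⟨hy.1, hc⟩
          have hys : y = s := by
            rcases hy2 with h | h
            · exact absurd h hy.2
            · exact h
          subst hys; exact ⟨rfl, hy.1, htr⟩
        · exact absurd (Or.inl ⟨htr, hy⟩) h2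
      · have hyC : y ∉ C := fun hc => hyn (Or.inl hc)
        exact absurd (Or.inr ⟨i, hi, hz, hyC⟩) h2
    have Klem : ∀ y, Relation.ReflTransGen (Engrave tr ρ (C ∪ {s})) init y →
        Relation.ReflTransGen (Engrave tr ρ C) init y ∨
        (s ∈ Set.range ρ ∧ ∃ t, tr s t ∧ Relation.ReflTransGen (Engrave tr ρ C) t y) := by
      intro y h
      induction h with
      | refl => exact Or.inl .refl
      | tail hprev e ih =>
        rename_i b c
        by_cases hEC : Engrave tr ρ C b c
        · rcases ih with h | ⟨hr, t, ht, hp⟩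
          · exact Or.inl (h.tail hEC)
          · exact Or.inr ⟨hr, t, ht, hp.tail hEC⟩
        · obtain ⟨hbs, hr, htr⟩ := cls _ _ e hEC
          exact Or.inr ⟨hr, c, htr, .refl⟩
    rcases Klem f P with hP | ⟨⟨j, hj⟩, t, hst, Ptf⟩
    · exact absurd (RespAux.wins_of_reach htotal hlasso ⟨f, hf, hP⟩) hlose
    · have M : ∀ x, Relation.ReflTransGen (Engrave tr ρ C) x f → x ∉ Set.range ρ := by
        rintro x hx ⟨i, hi⟩
        refine hlose (RespAux.wins_of_reach htotal hlasso ⟨f, hf, ?_⟩)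
        have h1 := RespAux.run_reach hrun C i
        rw [hrun0] at h1
        rw [← hi] at hx
        exact h1.trans hx
      have Nlem : ∀ x, Relation.ReflTransGen (Engrave tr ρ C) x f →
          Relation.ReflTransGen (Engrave tr ρ ({s} : Set S)) x f := by
        intro x hx
        induction hx using Relation.ReflTransGen.head_induction_on with
        | refl => exact .refl
        | head e h ih =>
          rename_i a c
          have hnr : a ∉ Set.range ρ := M a (h.head e)
          have htr : tr a c := by
            rcases e with ⟨h1, _⟩ | ⟨i, hi, _, _⟩
            · exact h1
            · exact absurd ⟨i, hi⟩ hnr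
          exact ih.head (Or.inl ⟨htr, fun hc => hnr hc.1⟩)
      have path1 : Relation.ReflTransGen (Engrave tr ρ ({s} : Set S)) init s := by
        have h1 := RespAux.run_reach hrun ({s} : Set S) j
        rw [hrun0, hj] at h1
        exact h1
      have edge : Engrave tr ρ ({s} : Set S) s t := Or.inl ⟨hst, fun h => h.2 rfl⟩
      exact RespAux.wins_of_reach htotal hlasso ⟨f, hf, path1.trans ((Nlem t Ptf).head edge)⟩
  · -- Sat loses the game for the empty coalition
    intro hW
    obtain ⟨f, hf, P⟩ := RespAux.reach_of_wins hW
    have stay : ∀ y, Relation.ReflTransGen (Engrave tr ρ (∅ : Set S)) init y →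
        y ∈ Set.range ρ := by
      intro y h
      induction h with
      | refl => exact ⟨0, hrun0⟩
      | tail _ e ih =>
        rcases e with ⟨_, hn⟩ | ⟨i, _, hc, _⟩
        · exact absurd ⟨ih, Set.notMem_empty _⟩ hn
        · exact ⟨i + 1, hc⟩
    obtain ⟨i, hi⟩ := stay f P
    exact hviol i (by rw [hi]; exact hf)
end

section
/- For a reachability objective in the optimistic backward responsibility setting, if R is the (nonempty) set of states that are winning on their own, then each state in R has responsibility value exactly 1/|R| and every other state has responsibility 0. -/
/-- The Shapley value of agent `a` in the cooperative game `γ`. -/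
noncomputable def shapley {α : Type*} [Fintype α] [DecidableEq α]
    (γ : Finset α → ℚ) (a : α) : ℚ :=
  ∑ C ∈ (Finset.univ.erase a).powerset,
    (((Fintype.card α - C.card - 1).factorial * C.card.factorial : ℚ) /
      ((Fintype.card α).factorial : ℚ)) * (γ (insert a C) - γ C)

section Game

open Classical in
/-- successor along the run -/
noncomputable def runSucc {S : Type*} (ρ : ℕ → S) (u : S) : S :=
  if h : ∃ i, ρ i = u then ρ (h.choose + 1) else u

variable {S : Type*} {tr : S → S → Prop} {ρ : ℕ → S}

lemma lasso_succ_eq (hlasso : SimpleLasso ρ) : ∀ {i j : ℕ}, ρ i = ρ j → ρ (i + 1) = ρ (j + 1) := by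
  obtain ⟨k, ℓ, hℓ, hper, hinj⟩ := hlasso
  have redux : ∀ i, ∃ i' < k + ℓ, ρ i' = ρ i ∧ ρ (i' + 1) = ρ (i + 1) := by
    intro i
    induction i using Nat.strong_induction_on with
    | _ i ih =>
      rcases lt_or_ge i (k + ℓ) with h | h
      · exact ⟨i, h, rfl, rfl⟩
      · obtain ⟨i', hi', h1, h2⟩ := ih (i - ℓ) (by omega)
        refine ⟨i', hi', ?_, ?_⟩
        · rw [h1]; have := hper (i - ℓ) (by omega)
          rw [show i - ℓ + ℓ = i by omega] at this; rw [this]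
        · rw [h2]; have := hper (i - ℓ + 1) (by omega)
          rw [show i - ℓ + 1 + ℓ = i + 1 by omega] at this; rw [this]
  intro i j h
  obtain ⟨i', hi', hi1, hi2⟩ := redux i
  obtain ⟨j', hj', hj1, hj2⟩ := redux j
  have : i' = j' := hinj hi' hj' (by rw [hi1, hj1, h])
  rw [← hi2, ← hj2, this]

lemma runSucc_spec (hlasso : SimpleLasso ρ) (i : ℕ) : runSucc ρ (ρ i) = ρ (i + 1) := by
  have h : ∃ j, ρ j = ρ i := ⟨i, rfl⟩
  rw [runSucc, dif_pos h]
  exact lasso_succ_eq hlasso h.choose_spec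

lemma engrave_mem_range {C : Set S} {u v : S} (h : Engrave tr ρ C u v)
    (hu : u ∈ Set.range ρ) (huc : u ∉ C) : ∃ i, ρ i = u ∧ v = ρ (i + 1) := by
  rcases h with ⟨_, hn⟩ | ⟨i, h1, h2, _⟩
  · exact absurd ⟨hu, huc⟩ hn
  · exact ⟨i, h1, h2.symm⟩

lemma engrave_tr {C : Set S} (hrun : ∀ i, tr (ρ i) (ρ (i + 1))) {u v : S}
    (h : Engrave tr ρ C u v) : tr u v := by
  rcases h with ⟨h, _⟩ | ⟨i, h1, h2, _⟩
  · exact h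
  · rw [← h1, ← h2]; exact hrun i

/-- The empty coalition never wins (reachability, violating run). -/
lemma not_wins_empty (F : Set S) (init : S) (hrun0 : ρ 0 = init)
    (hviol : ∀ i, ρ i ∉ F) :
    ¬ Wins (Engrave tr ρ (∅ : Set S)) ((∅ : Set S) ∪ {t | t ∉ Set.range ρ})
      (ReachObj F) init := by
  rintro ⟨σ, hσ, hwin⟩
  have := hwin ρ hrun0 (fun i => ⟨Or.inr ⟨i, rfl, rfl, fun h => h⟩, ?_⟩)
  · obtain ⟨i, hi⟩ := this
    exact hviol i hi
  · rintro (h | h)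
    · exact absurd h (Set.notMem_empty _)
    · exact absurd ⟨i, rfl⟩ h

/-- Monotonicity: a singleton winner inside `C` makes `C` win. -/
lemma wins_mono (hlasso : SimpleLasso ρ) (hrun : ∀ i, tr (ρ i) (ρ (i + 1)))
    (F : Set S) (init : S) {C : Set S} {s : S} (hs : s ∈ C)
    (hw : Wins (Engrave tr ρ ({s} : Set S)) (({s} : Set S) ∪ {t | t ∉ Set.range ρ})
      (ReachObj F) init) :
    Wins (Engrave tr ρ C) (C ∪ {t | t ∉ Set.range ρ}) (ReachObj F) init := by
  obtain ⟨σ, hσ, hwin⟩ := hw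
  classical
  refine ⟨fun u => if u = s ∨ u ∉ Set.range ρ then σ u else runSucc ρ u, ?_, ?_⟩
  · intro u
    dsimp only
    by_cases h : u = s ∨ u ∉ Set.range ρ
    · rw [if_pos h]
      have htru : tr u (σ u) := engrave_tr hrun (hσ u)
      rcases h with rfl | h
      · exact Or.inl ⟨htru, fun ⟨_, h2⟩ => h2 hs⟩
      · exact Or.inl ⟨htru, fun ⟨h1, _⟩ => h h1⟩
    · push_neg at h
      obtain ⟨hne, i, hi⟩ := h
      rw [if_neg (by push_neg; exact ⟨hne, ⟨i, hi⟩⟩)]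
      subst hi
      rw [runSucc_spec hlasso]
      by_cases hc : ρ i ∈ C
      · exact Or.inl ⟨hrun i, fun ⟨_, h2⟩ => h2 hc⟩
      · exact Or.inr ⟨i, rfl, rfl, hc⟩
  · intro π h0 hcons
    refine hwin π h0 (fun i => ?_)
    obtain ⟨hedge, hctl⟩ := hcons i
    by_cases hmem : π i ∈ C
    · have hstep := hctl (Or.inl hmem)
      dsimp only at hstep
      by_cases h : π i = s ∨ π i ∉ Set.range ρ
      · rw [if_pos h] at hstep
        rcases h with h | h
        · refine ⟨by rw [hstep, h]; exact hσ s, fun _ => by rw [hstep, h]⟩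
        · refine ⟨by rw [hstep]; exact hσ _, fun _ => by rw [hstep]⟩
      · push_neg at h
        obtain ⟨hne, hr⟩ := h
        rw [if_neg (by push_neg; exact ⟨hne, hr⟩)] at hstep
        obtain ⟨j, hj⟩ := hr
        refine ⟨?_, ?_⟩
        · rw [hstep, ← hj, runSucc_spec hlasso]
          exact Or.inr ⟨j, rfl, rfl, by rw [hj]; exact hne⟩
        · rintro (h | h)
          · exact absurd h hne
          · exact absurd ⟨j, hj⟩ h
    · -- π i ∉ C
      rcases hedge with ⟨htru, hn⟩ | ⟨j, h1, h2, h3⟩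
      · -- then π i ∉ range ρ
        have hnr : π i ∉ Set.range ρ := fun h => hn ⟨h, hmem⟩
        have hstep := hctl (Or.inr hnr)
        dsimp only at hstep
        rw [if_pos (Or.inr hnr)] at hstep
        refine ⟨?_, fun _ => hstep⟩
        rw [hstep]; exact Or.inl ⟨engrave_tr hrun (hσ _), fun ⟨h1, _⟩ => hnr h1⟩
      · have hne : π i ≠ s := fun h => hmem (h ▸ hs)
        refine ⟨Or.inr ⟨j, h1, h2, by simp [hne]⟩, ?_⟩
        rintro (h | h)
        · exact absurd h hne
        · exact absurd ⟨j, h1⟩ h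

end Game

section Extract
variable {S : Type*} {tr : S → S → Prop} {ρ : ℕ → S}

lemma wins_extract (hlasso : SimpleLasso ρ) (hrun : ∀ i, tr (ρ i) (ρ (i + 1)))
    (F : Set S) (init : S) (hrun0 : ρ 0 = init) (hviol : ∀ i, ρ i ∉ F)
    {C : Set S}
    (hw : Wins (Engrave tr ρ C) (C ∪ {t | t ∉ Set.range ρ}) (ReachObj F) init) :
    ∃ s, s ∈ C ∧ Wins (Engrave tr ρ ({s} : Set S))
      (({s} : Set S) ∪ {t | t ∉ Set.range ρ}) (ReachObj F) init := by
  classical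
  obtain ⟨σ, hσ, hwin⟩ := hw
  -- a choice-based step function
  have hstepex : ∀ u : S, ∃ v : S,
      ((u ∈ Set.range ρ ∧ u ∉ C) → v = runSucc ρ u) ∧
      (¬(u ∈ Set.range ρ ∧ u ∉ C) → v = σ u) := by
    intro u
    by_cases h : u ∈ Set.range ρ ∧ u ∉ C
    · exact ⟨runSucc ρ u, fun _ => rfl, fun h' => absurd h h'⟩
    · exact ⟨σ u, fun h' => absurd h' h, fun _ => rfl⟩
  choose step hstep1 hstep2 using hstepex
  obtain ⟨π, hπ0, hπs⟩ : ∃ π : ℕ → S, π 0 = init ∧ ∀ i, π (i + 1) = step (π i) :=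
    ⟨fun n => step^[n] init, rfl, fun i => Function.iterate_succ_apply' step i init⟩
  have hcons : ∀ i, Engrave tr ρ C (π i) (π (i + 1)) ∧
      (π i ∈ C ∪ {t | t ∉ Set.range ρ} → π (i + 1) = σ (π i)) := by
    intro i
    by_cases h : π i ∈ Set.range ρ ∧ π i ∉ C
    · obtain ⟨⟨a, ha⟩, hnc⟩ := h
      constructor
      · rw [hπs, hstep1 _ ⟨⟨a, ha⟩, hnc⟩, ← ha, runSucc_spec hlasso]
        exact Or.inr ⟨a, rfl, rfl, by rw [ha]; exact hnc⟩
      · rintro (hm | hm)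
        · exact absurd hm hnc
        · exact absurd ⟨a, ha⟩ hm
    · exact ⟨by rw [hπs, hstep2 _ h]; exact hσ _, fun _ => by rw [hπs, hstep2 _ h]⟩
  have hreach : ∃ i, π i ∈ F := hwin π hπ0 hcons
  obtain ⟨N, hNF, hNmax⟩ : ∃ N, π N ∈ F ∧ ∀ i, i < N → ¬ (π i ∈ C ∧ π i ∈ Set.range ρ) →
      True := ⟨Nat.find hreach, Nat.find_spec hreach, fun _ _ _ => trivial⟩
  -- run-following before any coalition state
  have claim1 : ∀ i, (∀ i' < i, ¬(π i' ∈ C ∧ π i' ∈ Set.range ρ)) → π i ∈ Set.range ρ := by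
    intro i
    induction i with
    | zero => exact fun _ => ⟨0, by rw [hrun0]; exact hπ0.symm⟩
    | succ i ih =>
      intro hyp
      have hir : π i ∈ Set.range ρ := ih (fun i' h => hyp i' (by omega))
      have hinc : π i ∉ C := fun hc => hyp i (by omega) ⟨hc, hir⟩
      obtain ⟨a, ha⟩ := id hir
      rw [hπs, hstep1 _ ⟨hir, hinc⟩, ← ha, runSucc_spec hlasso]
      exact ⟨a + 1, rfl⟩
  have hCex : ∃ i, i < N ∧ π i ∈ C ∧ π i ∈ Set.range ρ := by
    by_contra hcon
    push_neg at hcon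
    obtain ⟨a, ha⟩ := claim1 N (fun i' h hand => hcon i' h hand.1 hand.2)
    exact hviol a (by rw [ha]; exact hNF)
  obtain ⟨j, hPj, hjmax⟩ : ∃ j, (j < N ∧ π j ∈ C ∧ π j ∈ Set.range ρ) ∧
      ∀ i, j < i → i ≤ N → ¬(i < N ∧ π i ∈ C ∧ π i ∈ Set.range ρ) := by
    obtain ⟨i0, hi0⟩ := hCex
    exact ⟨Nat.findGreatest (fun i => i < N ∧ π i ∈ C ∧ π i ∈ Set.range ρ) N,
      Nat.findGreatest_spec (P := fun i => i < N ∧ π i ∈ C ∧ π i ∈ Set.range ρ)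
        (le_of_lt hi0.1) hi0,
      fun i h1 h2 => Nat.findGreatest_is_greatest (P := fun i => i < N ∧ π i ∈ C ∧ π i ∈ Set.range ρ) h1 h2⟩
  obtain ⟨hjN, hjC, m, hm⟩ := hPj
  obtain ⟨s, hsval⟩ : ∃ s, π j = s := ⟨π j, rfl⟩
  rw [hsval] at hjC hm
  refine ⟨s, hjC, fun u => if u = s ∨ u ∉ Set.range ρ then σ u else runSucc ρ u, ?_, ?_⟩
  · intro u
    dsimp only
    by_cases h : u = s ∨ u ∉ Set.range ρ
    · rw [if_pos h]
      have htru : tr u (σ u) := engrave_tr hrun (hσ u)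
      rcases h with rfl | h
      · exact Or.inl ⟨htru, fun ⟨_, h2⟩ => h2 rfl⟩
      · exact Or.inl ⟨htru, fun ⟨h1, _⟩ => h h1⟩
    · push_neg at h
      obtain ⟨hne, a, ha⟩ := h
      rw [if_neg (by push_neg; exact ⟨hne, ⟨a, ha⟩⟩), ← ha, runSucc_spec hlasso]
      exact Or.inr ⟨a, rfl, rfl, by rw [ha]; exact hne⟩
  · intro π'' h0 hcons''
    -- every consistent path follows the run until it hits s
    have hfollow : ∀ i, (∀ i' ≤ i, π'' i' ≠ s) → π'' i = ρ i := by
      intro i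
      induction i with
      | zero => intro _; rw [h0, hrun0]
      | succ i ih =>
        intro hyp
        have hi : π'' i = ρ i := ih (fun i' h => hyp i' (by omega))
        have hne : π'' i ≠ s := hyp i (by omega)
        obtain ⟨a, ha1, ha2⟩ := engrave_mem_range (hcons'' i).1 ⟨i, hi.symm⟩ hne
        rw [ha2]
        exact lasso_succ_eq hlasso (by rw [ha1, hi])
    have ht0 : ∃ t0, π'' t0 = s := by
      by_contra h
      push_neg at h
      exact h m (by rw [hfollow m (fun i' _ => h i'), hm])
    obtain ⟨t0, ht0⟩ := ht0
    -- after hitting s, the path mirrors π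
    have key : ∀ d, j + (d + 1) ≤ N → π'' (t0 + (d + 1)) = π (j + (d + 1)) := by
      intro d
      induction d with
      | zero =>
        intro _
        have h1 : π (j + 1) = σ (π j) := (hcons j).2 (Or.inl (hsval ▸ hjC))
        have h2 : π'' (t0 + 1) = σ s := by
          have hc := (hcons'' t0).2 (Or.inl (by rw [ht0]; rfl))
          rw [ht0] at hc
          dsimp only at hc
          rw [hc, if_pos (Or.inl rfl)]
        rw [h1, h2, hsval]
      | succ d ih =>
        intro hd1
        have hd : π'' (t0 + (d + 1)) = π (j + (d + 1)) := ih (by omega)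
        have hnot := hjmax (j + (d + 1)) (by omega) (by omega)
        by_cases hur : π (j + (d + 1)) ∈ Set.range ρ
        · have hunc : π (j + (d + 1)) ∉ C := fun hc => hnot ⟨by omega, hc, hur⟩
          have hune : π (j + (d + 1)) ≠ s := fun h => hunc (by rw [h, ← hsval]; exact hsval ▸ hjC)
          obtain ⟨a, ha1, ha2⟩ :=
            engrave_mem_range (hcons (j + (d + 1))).1 hur hunc
          obtain ⟨b, hb1, hb2⟩ :=
            engrave_mem_range (hcons'' (t0 + (d + 1))).1 (by rw [hd]; exact hur)
              (by rw [hd]; exact hune)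
          have hv : π'' (t0 + (d + 1) + 1) = ρ (a + 1) := by
            rw [hb2]
            exact lasso_succ_eq hlasso (by rw [hb1, hd, ha1])
          rw [show t0 + (d + 1 + 1) = t0 + (d + 1) + 1 by omega, hv,
            show j + (d + 1 + 1) = j + (d + 1) + 1 by omega, ha2]
        · have h1 : π (j + (d + 1) + 1) = σ (π (j + (d + 1))) :=
            (hcons (j + (d + 1))).2 (Or.inr hur)
          have h2 : π'' (t0 + (d + 1) + 1) = σ (π (j + (d + 1))) := by
            have hc := (hcons'' (t0 + (d + 1))).2 (Or.inr (by rw [hd]; exact hur))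
            rw [hd] at hc
            dsimp only at hc
            rw [hc, if_pos (Or.inr hur)]
          rw [show t0 + (d + 1 + 1) = t0 + (d + 1) + 1 by omega, h2,
            show j + (d + 1 + 1) = j + (d + 1) + 1 by omega, h1]
    refine ⟨t0 + (N - j), ?_⟩
    have hk := key (N - j - 1) (by omega)
    rw [show N - j - 1 + 1 = N - j by omega] at hk
    rw [hk, show j + (N - j) = N by omega]
    exact hNF
end Extract


lemma term_id (n r c : ℕ) (h1 : 1 ≤ r) (hr : r ≤ n) (hc : c ≤ n - r) :
    (r : ℚ) * (((n - r).choose c : ℚ) * (c.factorial : ℚ) * ((n - 1 - c).factorial : ℚ)) =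
      (((n - r).choose c : ℚ) * (c.factorial : ℚ) * ((n - c).factorial : ℚ)) -
      (((n - r).choose (c + 1) : ℚ) * ((c + 1).factorial : ℚ) * ((n - (c + 1)).factorial : ℚ)) := by
  have h2 : (n - r).choose (c + 1) * (c + 1) = (n - r).choose c * (n - r - c) :=
    Nat.choose_succ_right_eq _ _
  have h3 : n - c = (n - 1 - c) + 1 := by omega
  have h4 : n - (c + 1) = n - 1 - c := by omega
  have h5 : (n - r - c) + r = n - c := by omega
  have hc2 : ((r : ℚ)) = ((n - c : ℕ) : ℚ) - ((n - r - c : ℕ) : ℚ) := by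
    have := congrArg (fun x : ℕ => (x : ℚ)) h5
    push_cast at this
    linarith
  have hc1 : ((n - r).choose (c + 1) : ℚ) * ((c : ℚ) + 1) =
      ((n - r).choose c : ℚ) * ((n - r - c : ℕ) : ℚ) := by
    have := congrArg (fun x : ℕ => (x : ℚ)) h2
    push_cast at this
    convert this using 2
  have hfac : ((n - c).factorial : ℚ) = ((n - c : ℕ) : ℚ) * ((n - 1 - c).factorial : ℚ) := by
    rw [h3, Nat.factorial_succ]
    push_cast
    ring
  rw [h4, Nat.factorial_succ, hfac]
  push_cast
  linear_combination (((c).factorial : ℚ) * ((n - 1 - c).factorial : ℚ)) * hc1 +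
    (((n - r).choose c : ℚ) * ((c).factorial : ℚ) * ((n - 1 - c).factorial : ℚ)) * hc2

lemma key_sum (n r : ℕ) (h1 : 1 ≤ r) (hr : r ≤ n) :
    ∑ c ∈ Finset.range (n - r + 1),
      (((n - r).choose c : ℚ)) * ((c.factorial : ℚ) * ((n - 1 - c).factorial : ℚ)) =
      (n.factorial : ℚ) / r := by
  have hr0 : (r : ℚ) ≠ 0 := by positivity
  rw [eq_div_iff hr0]
  have : ∀ c ∈ Finset.range (n - r + 1),
      (((n - r).choose c : ℚ)) * ((c.factorial : ℚ) * ((n - 1 - c).factorial : ℚ)) * r =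
      (fun c => ((n - r).choose c : ℚ) * (c.factorial : ℚ) * ((n - c).factorial : ℚ)) c -
      (fun c => ((n - r).choose c : ℚ) * (c.factorial : ℚ) * ((n - c).factorial : ℚ)) (c + 1) := by
    intro c hc
    rw [Finset.mem_range] at hc
    have := term_id n r c h1 hr (by omega)
    dsimp only
    linarith [this]
  rw [Finset.sum_mul, Finset.sum_congr rfl this, Finset.sum_range_sub']
  simp [Nat.choose_self, Nat.choose_succ_self, Nat.sub_self]


/-- For reachability objectives in the optimistic setting, if `R` is the (nonempty)
set of states that are winning on their own, then every state in `R` has responsibility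
`1/|R|` and every other state has responsibility `0`. -/
theorem reach_optimistic_responsibility_value {S : Type*} [Fintype S] [DecidableEq S]
    (tr : S → S → Prop) (htotal : ∀ s, ∃ t, tr s t)
    (init : S) (F : Set S) (ρ : ℕ → S)
    (hrun0 : ρ 0 = init) (hrun : ∀ i, tr (ρ i) (ρ (i + 1)))
    (hlasso : SimpleLasso ρ) (hviol : ∀ i, ρ i ∉ F)
    (γ : Finset S → ℚ)
    (hγ : ∀ C : Finset S,
      (γ C = 1 ↔
        Wins (Engrave tr ρ (↑C : Set S)) ((↑C : Set S) ∪ {t | t ∉ Set.range ρ})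
          (ReachObj F) init) ∧
      (γ C = 0 ∨ γ C = 1))
    (R : Finset S)
    (hR : ∀ s : S, s ∈ R ↔
      (Wins (Engrave tr ρ ({s} : Set S)) (({s} : Set S) ∪ {t | t ∉ Set.range ρ})
          (ReachObj F) init ∧
       ¬Wins (Engrave tr ρ (∅ : Set S)) ((∅ : Set S) ∪ {t | t ∉ Set.range ρ})
          (ReachObj F) init))
    (hRne : R.Nonempty) :
    (∀ s ∈ R, shapley γ s = 1 / R.card) ∧ (∀ s ∉ R, shapley γ s = 0) := by
  classical
  have hγ' : ∀ C : Finset S, γ C = if (C ∩ R).Nonempty then 1 else 0 := by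
    intro C
    by_cases h : (C ∩ R).Nonempty
    · rw [if_pos h]
      obtain ⟨s, hs⟩ := h
      rw [Finset.mem_inter] at hs
      have hws := ((hR s).mp hs.2).1
      exact (hγ C).1.mpr (wins_mono hlasso hrun F init (Finset.mem_coe.mpr hs.1) hws)
    · rw [if_neg h]
      rcases (hγ C).2 with h0 | h1
      · exact h0
      · exfalso
        obtain ⟨s, hsC, hws⟩ :=
          wins_extract hlasso hrun F init hrun0 hviol ((hγ C).1.mp h1)
        exact h ⟨s, Finset.mem_inter.mpr ⟨Finset.mem_coe.mp hsC,
          (hR s).mpr ⟨hws, not_wins_empty F init hrun0 hviol⟩⟩⟩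
  have hrle : R.card ≤ Fintype.card S := by
    simpa using Finset.card_le_card (Finset.subset_univ R)
  have hr1 : 1 ≤ R.card := Finset.card_pos.mpr hRne
  constructor
  · intro s hs
    rw [shapley]
    have hterm : ∀ C ∈ (Finset.univ.erase s).powerset,
        (((Fintype.card S - C.card - 1).factorial * C.card.factorial : ℚ) /
            ((Fintype.card S).factorial : ℚ)) * (γ (insert s C) - γ C) =
        if C ∩ R = ∅ then
          (((Fintype.card S - C.card - 1).factorial * C.card.factorial : ℚ) /
            ((Fintype.card S).factorial : ℚ)) else 0 := by
      intro C _
      have h1 : γ (insert s C) = 1 := by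
        rw [hγ', if_pos ⟨s, Finset.mem_inter.mpr ⟨Finset.mem_insert_self s C, hs⟩⟩]
      by_cases h : C ∩ R = ∅
      · rw [if_pos h, h1, hγ', if_neg (by rw [h]; exact Finset.not_nonempty_empty),
          sub_zero, mul_one]
      · rw [if_neg h, h1, hγ',
          if_pos (Finset.nonempty_iff_ne_empty.mpr h), sub_self, mul_zero]
    rw [Finset.sum_congr rfl hterm, ← Finset.sum_filter]
    have hset : (Finset.univ.erase s).powerset.filter (fun C => C ∩ R = ∅) =
        (Finset.univ \ R).powerset := by
      ext C
      constructor
      · intro hC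
        rw [Finset.mem_filter, Finset.mem_powerset] at hC
        rw [Finset.mem_powerset]
        intro x hx
        rw [Finset.mem_sdiff]
        exact ⟨Finset.mem_univ x, fun hxR =>
          (Finset.eq_empty_iff_forall_notMem.mp hC.2 x) (Finset.mem_inter.mpr ⟨hx, hxR⟩)⟩
      · intro hC
        rw [Finset.mem_powerset] at hC
        rw [Finset.mem_filter, Finset.mem_powerset]
        have hnR : ∀ x ∈ C, x ∉ R := fun x hx => (Finset.mem_sdiff.mp (hC hx)).2
        refine ⟨fun {x} hx => Finset.mem_erase.mpr
          ⟨fun he => hnR x hx (by rw [he]; exact hs), Finset.mem_univ _⟩,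
          Finset.eq_empty_iff_forall_notMem.mpr (fun x hx =>
            hnR _ (Finset.mem_inter.mp hx).1 (Finset.mem_inter.mp hx).2)⟩
    rw [hset, Finset.sum_powerset]
    have hinner : ∀ j ∈ Finset.range ((Finset.univ \ R).card + 1),
        (∑ C ∈ Finset.powersetCard j (Finset.univ \ R),
          (((Fintype.card S - C.card - 1).factorial * C.card.factorial : ℚ) /
            ((Fintype.card S).factorial : ℚ))) =
        ((Finset.univ \ R).card.choose j : ℚ) *
          (((Fintype.card S - j - 1).factorial * j.factorial : ℚ) /
            ((Fintype.card S).factorial : ℚ)) := by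
      intro j _
      rw [Finset.sum_congr rfl (fun C hC => by
        rw [(Finset.mem_powersetCard.mp hC).2]), Finset.sum_const,
        Finset.card_powersetCard, nsmul_eq_mul]
    rw [Finset.sum_congr rfl hinner]
    have hm : (Finset.univ \ R).card = Fintype.card S - R.card := by
      rw [Finset.card_sdiff_of_subset (Finset.subset_univ R), Finset.card_univ]
    have hfac0 : ((Fintype.card S).factorial : ℚ) ≠ 0 := by
      exact_mod_cast Nat.factorial_ne_zero _
    have hks := key_sum (Fintype.card S) R.card hr1 hrle
    rw [hm]
    rw [show (1 : ℚ) / R.card = ((Fintype.card S).factorial : ℚ) / R.card /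
      ((Fintype.card S).factorial : ℚ) by field_simp]
    rw [← hks, Finset.sum_div]
    refine Finset.sum_congr rfl (fun c hc => ?_)
    rw [Finset.mem_range] at hc
    have : Fintype.card S - c - 1 = Fintype.card S - 1 - c := by omega
    rw [this]
    push_cast
    ring
  · intro s hs
    rw [shapley]
    apply Finset.sum_eq_zero
    intro C _
    have h : insert s C ∩ R = C ∩ R := by
      ext x
      simp only [Finset.mem_inter, Finset.mem_insert]
      constructor
      · rintro ⟨hx1 | hx1, hx2⟩
        · exact absurd (hx1 ▸ hx2) hs
        · exact ⟨hx1, hx2⟩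
      · rintro ⟨hx1, hx2⟩
        exact ⟨Or.inr hx1, hx2⟩
    rw [hγ', hγ', h, sub_self, mul_zero]
end

section
/- Block responsibility need not relate monotonically to individual responsibility: there exists a transition system with a partition of its state space such that a block has block responsibility 0 while one of its member states has positive individual responsibility. -/
def tr4 : Fin 4 → Fin 4 → Prop := fun s t =>
  (s = 0 ∧ (t = 0 ∨ t = 1 ∨ t = 2)) ∨ (s = 1 ∧ (t = 1 ∨ t = 3)) ∨
  (s = 2 ∧ (t = 2 ∨ t = 3)) ∨ (s = 3 ∧ t = 3)

instance : DecidableRel tr4 := fun s t => by unfold tr4; infer_instance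

def ρ4 : ℕ → Fin 4 := fun _ => 0

def F4 : Set (Fin 4) := {3}

lemma range_ρ4 {s : Fin 4} (h : s ≠ 0) : s ∉ Set.range ρ4 := by
  rintro ⟨j, hj⟩; exact h hj.symm

lemma F4_ne {s : Fin 4} (h : s ≠ 3) : s ∉ F4 := fun hs => h hs

lemma key_iff (C : Finset (Fin 4)) :
    Wins (Engrave tr4 ρ4 (↑C : Set (Fin 4))) (↑C : Set (Fin 4)) (ReachObj F4) 0 ↔
      (0 ∈ C ∧ (1 ∈ C ∨ 2 ∈ C)) := by
  constructor
  · rintro ⟨σ, hσ, hwin⟩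
    by_contra hP
    by_cases h0 : (0 : Fin 4) ∈ C
    · push_neg at hP
      obtain ⟨h1, h2⟩ := hP h0
      have hnm : ¬((0 : Fin 4) ∈ Set.range ρ4 ∧ (0 : Fin 4) ∉ (↑C : Set (Fin 4))) :=
        fun ⟨_, hc⟩ => hc h0
      have hσ0 : σ 0 = 0 ∨ σ 0 = 1 ∨ σ 0 = 2 := by
        rcases hσ 0 with ⟨ht, -⟩ | ⟨i, -, -, h⟩
        · rcases ht with ⟨-, h⟩ | ⟨h, -⟩ | ⟨h, -⟩ | ⟨h, -⟩
          · exact h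
          all_goals exact absurd h (by decide)
        · exact absurd h0 h
      rcases hσ0 with hs | hs | hs
      · obtain ⟨i, hi⟩ := hwin (fun _ => 0) rfl
          (fun i => ⟨Or.inl ⟨(by decide : tr4 0 0), hnm⟩, fun _ => hs.symm⟩)
        exact F4_ne (by decide : (0:Fin 4) ≠ 3) hi
      · set π : ℕ → Fin 4 := fun i => if i = 0 then 0 else 1 with hπ
        obtain ⟨i, hi⟩ := hwin π rfl (fun i => by
          rcases Nat.eq_zero_or_pos i with h | h
          · subst h
            exact ⟨Or.inl ⟨(by decide : tr4 0 1), hnm⟩, fun _ => by simp [π, hs]⟩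
          · have hi : i ≠ 0 := Nat.pos_iff_ne_zero.mp h
            have hi1 : i + 1 ≠ 0 := Nat.succ_ne_zero i
            refine ⟨Or.inl ⟨by simp only [π, if_neg hi, if_neg hi1]; decide,
              by simp only [π, if_neg hi]
                 exact fun ⟨hr, _⟩ => range_ρ4 (by decide) hr⟩, fun hc => ?_⟩
            simp only [π, if_neg hi] at hc
            exact absurd hc h1)
        refine F4_ne ?_ hi
        simp only [π]; split <;> decide
      · set π : ℕ → Fin 4 := fun i => if i = 0 then 0 else 2 with hπ
        obtain ⟨i, hi⟩ := hwin π rfl (fun i => by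
          rcases Nat.eq_zero_or_pos i with h | h
          · subst h
            exact ⟨Or.inl ⟨(by decide : tr4 0 2), hnm⟩, fun _ => by simp [π, hs]⟩
          · have hi : i ≠ 0 := Nat.pos_iff_ne_zero.mp h
            have hi1 : i + 1 ≠ 0 := Nat.succ_ne_zero i
            refine ⟨Or.inl ⟨by simp only [π, if_neg hi, if_neg hi1]; decide,
              by simp only [π, if_neg hi]
                 exact fun ⟨hr, _⟩ => range_ρ4 (by decide) hr⟩, fun hc => ?_⟩
            simp only [π, if_neg hi] at hc
            exact absurd hc h2)
        refine F4_ne ?_ hi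
        simp only [π]; split <;> decide
    · obtain ⟨i, hi⟩ := hwin (fun _ => 0) rfl
        (fun i => ⟨Or.inr ⟨0, rfl, rfl, h0⟩, fun hc => absurd hc h0⟩)
      exact F4_ne (by decide : (0:Fin 4) ≠ 3) hi
  · rintro ⟨h0, h12⟩
    by_cases h1 : (1 : Fin 4) ∈ C
    · refine ⟨![1, 3, 2, 3], fun s => ?_, fun π hinit hcons => ?_⟩
      · fin_cases s
        · exact Or.inl ⟨(by decide : tr4 0 1), fun ⟨_, h⟩ => h h0⟩
        · exact Or.inl ⟨(by decide : tr4 1 3), fun ⟨hr, _⟩ => range_ρ4 (by decide) hr⟩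
        · exact Or.inl ⟨(by decide : tr4 2 2), fun ⟨hr, _⟩ => range_ρ4 (by decide) hr⟩
        · exact Or.inl ⟨(by decide : tr4 3 3), fun ⟨hr, _⟩ => range_ρ4 (by decide) hr⟩
      · have e1 : π 1 = 1 := by
          have := (hcons 0).2 (by rw [hinit]; exact h0)
          rw [this, hinit]; rfl
        have e2 : π 2 = 3 := by
          have := (hcons 1).2 (by rw [e1]; exact h1)
          rw [this, e1]; rfl
        exact ⟨2, by rw [e2]; rfl⟩
    · have h2 : (2 : Fin 4) ∈ C := h12.resolve_left h1
      refine ⟨![2, 1, 3, 3], fun s => ?_, fun π hinit hcons => ?_⟩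
      · fin_cases s
        · exact Or.inl ⟨(by decide : tr4 0 2), fun ⟨_, h⟩ => h h0⟩
        · exact Or.inl ⟨(by decide : tr4 1 1), fun ⟨hr, _⟩ => range_ρ4 (by decide) hr⟩
        · exact Or.inl ⟨(by decide : tr4 2 3), fun ⟨hr, _⟩ => range_ρ4 (by decide) hr⟩
        · exact Or.inl ⟨(by decide : tr4 3 3), fun ⟨hr, _⟩ => range_ρ4 (by decide) hr⟩
      · have e1 : π 1 = 2 := by
          have := (hcons 0).2 (by rw [hinit]; exact h0)
          rw [this, hinit]; rfl
        have e2 : π 2 = 3 := by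
          have := (hcons 1).2 (by rw [e1]; exact h2)
          rw [this, e1]; rfl
        exact ⟨2, by rw [e2]; rfl⟩


def P4 (C : Finset (Fin 4)) : Prop := 0 ∈ C ∧ (1 ∈ C ∨ 2 ∈ C)

instance : DecidablePred P4 := fun C => by unfold P4; infer_instance

noncomputable def gam (C : Finset (Fin 4)) : ℚ := if P4 C then 1 else 0

def blocks4 : Fin 3 → Finset (Fin 4) := ![{0,1},{2},{3}]

noncomputable def Gam (𝒞 : Finset (Fin 3)) : ℚ := if P4 (𝒞.biUnion blocks4) then 1 else 0

lemma gam_eq (C : Finset (Fin 4)) : gam C = (if P4 C then 1 else 0) := rfl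

lemma Gam_shapley : shapley Gam 1 = 0 := by
  rw [shapley, show (Finset.univ.erase (1:Fin 3)).powerset = {∅, {0}, {2}, {0,2}} from by decide,
    Finset.sum_insert (by decide), Finset.sum_insert (by decide), Finset.sum_insert (by decide),
    Finset.sum_singleton]
  rw [show Gam (insert 1 ∅) = 0 from by simp [Gam]; decide, show Gam ∅ = 0 from by simp [Gam]; decide,
    show Gam {1, 0} = 1 from by simp [Gam]; decide, show Gam {0} = 1 from by simp [Gam]; decide,
    show Gam {1, 2} = 0 from by simp [Gam]; decide, show Gam {2} = 0 from by simp [Gam]; decide,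
    show Gam {1, 0, 2} = 1 from by simp [Gam]; decide, show Gam {0,2} = 1 from by simp [Gam]; decide,
    show (∅ : Finset (Fin 3)).card = 0 from by decide,
    show ({0} : Finset (Fin 3)).card = 1 from by decide,
    show ({2} : Finset (Fin 3)).card = 1 from by decide,
    show ({0,2} : Finset (Fin 3)).card = 2 from by decide]
  norm_num

lemma gam_shapley : 0 < shapley gam 2 := by
  rw [shapley, show (Finset.univ.erase (2:Fin 4)).powerset =
    {∅, {0}, {1}, {3}, {0,1}, {0,3}, {1,3}, {0,1,3}} from by decide,
    Finset.sum_insert (by decide), Finset.sum_insert (by decide), Finset.sum_insert (by decide),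
    Finset.sum_insert (by decide), Finset.sum_insert (by decide), Finset.sum_insert (by decide),
    Finset.sum_insert (by decide), Finset.sum_singleton]
  rw [show gam (insert 2 ∅) = 0 from by simp [gam]; decide, show gam ∅ = 0 from by simp [gam]; decide,
    show gam {2, 0} = 1 from by simp [gam]; decide, show gam {0} = 0 from by simp [gam]; decide,
    show gam {2, 1} = 0 from by simp [gam]; decide, show gam {1} = 0 from by simp [gam]; decide,
    show gam {2, 3} = 0 from by simp [gam]; decide, show gam {3} = 0 from by simp [gam]; decide,
    show gam {2, 0, 1} = 1 from by simp [gam]; decide, show gam {0,1} = 1 from by simp [gam]; decide,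
    show gam {2, 0, 3} = 1 from by simp [gam]; decide, show gam {0,3} = 0 from by simp [gam]; decide,
    show gam {2, 1, 3} = 0 from by simp [gam]; decide, show gam {1,3} = 0 from by simp [gam]; decide,
    show gam {2, 0, 1, 3} = 1 from by simp [gam]; decide, show gam {0,1,3} = 1 from by simp [gam]; decide,
    show (∅ : Finset (Fin 4)).card = 0 from by decide,
    show ({0} : Finset (Fin 4)).card = 1 from by decide,
    show ({1} : Finset (Fin 4)).card = 1 from by decide,
    show ({3} : Finset (Fin 4)).card = 1 from by decide,
    show ({0,1} : Finset (Fin 4)).card = 2 from by decide,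
    show ({0,3} : Finset (Fin 4)).card = 2 from by decide,
    show ({1,3} : Finset (Fin 4)).card = 2 from by decide,
    show ({0,1,3} : Finset (Fin 4)).card = 3 from by decide]
  norm_num [Nat.factorial]


/-- Block responsibility need not relate monotonically to individual responsibility:
there is a transition system (with a reachability objective and violating run) and a
partition of its states into blocks such that some block has block responsibility `0`
while one of its member states has positive individual responsibility. -/
theorem block_responsibility_no_relation :
    ∃ (n : ℕ) (tr : Fin n → Fin n → Prop) (init : Fin n) (F : Set (Fin n))
      (ρ : ℕ → Fin n) (m : ℕ) (blocks : Fin m → Finset (Fin n))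
      (γ : Finset (Fin n) → ℚ) (Γ : Finset (Fin m) → ℚ) (b : Fin m) (s : Fin n),
      (∀ x, ∃ y, tr x y) ∧
      ρ 0 = init ∧ (∀ i, tr (ρ i) (ρ (i + 1))) ∧ (∀ i, ρ i ∉ F) ∧
      (∀ j, (blocks j).Nonempty) ∧
      (∀ j j', j ≠ j' → Disjoint (blocks j) (blocks j')) ∧
      Finset.univ.biUnion blocks = Finset.univ ∧
      (∀ C : Finset (Fin n),
        (γ C = 1 ↔
          Wins (Engrave tr ρ (↑C : Set (Fin n))) (↑C : Set (Fin n)) (ReachObj F) init) ∧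
        (γ C = 0 ∨ γ C = 1)) ∧
      (∀ 𝒞 : Finset (Fin m),
        (Γ 𝒞 = 1 ↔
          Wins (Engrave tr ρ (↑(𝒞.biUnion blocks) : Set (Fin n)))
            (↑(𝒞.biUnion blocks) : Set (Fin n)) (ReachObj F) init) ∧
        (Γ 𝒞 = 0 ∨ Γ 𝒞 = 1)) ∧
      s ∈ blocks b ∧ shapley Γ b = 0 ∧ 0 < shapley γ s := by
  refine ⟨4, tr4, 0, F4, ρ4, 3, blocks4, gam, Gam, 1, 2, ?_, rfl, ?_, ?_, ?_, ?_, ?_, ?_, ?_, ?_, Gam_shapley, gam_shapley⟩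
  · decide
  · exact fun i => (by decide : tr4 0 0)
  · exact fun i => F4_ne (by decide : (0:Fin 4) ≠ 3)
  · decide
  · decide
  · decide
  · intro C
    refine ⟨?_, ?_⟩
    · rw [key_iff]
      by_cases h : P4 C
      · simp only [gam_eq, if_pos h]
        exact ⟨fun _ => h, fun _ => trivial⟩
      · simp only [gam_eq, if_neg h]
        constructor
        · intro h0; exact absurd h0 (by norm_num)
        · intro hp; exact absurd hp h
    · by_cases h : P4 C <;> simp [gam_eq, h]
  · intro 𝒞
    refine ⟨?_, ?_⟩
    · rw [key_iff]
      by_cases h : P4 (𝒞.biUnion blocks4)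
      · simp only [Gam, if_pos h]
        exact ⟨fun _ => h, fun _ => trivial⟩
      · simp only [Gam, if_neg h]
        constructor
        · intro h0; exact absurd h0 (by norm_num)
        · intro hp; exact absurd hp h
    · by_cases h : P4 (𝒞.biUnion blocks4) <;> simp [Gam, h]
  · decide
end

section
/- Suppose the cooperative game on blocks is induced from a monotone game on states (i.e., Γ(𝒞) = γ(∪𝒞) for a monotone γ : 2^S → {0,1}). If every block with a block-switching pair is a singleton, then for every state s, γ has a switching pair (C, s) for some C ⊆ S if and only if Γ has a block-switching pair for the block containing s. -/
private lemma block_eq_of_mem {S : Type*} [DecidableEq S] {𝔖 : Finset (Finset S)}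
    (hpart₂ : ∀ B ∈ 𝔖, ∀ B' ∈ 𝔖, B ≠ B' → Disjoint B B')
    {B B' : Finset S} (hB : B ∈ 𝔖) (hB' : B' ∈ 𝔖) {x : S}
    (hx : x ∈ B) (hx' : x ∈ B') : B = B' := by
  by_contra h
  exact Finset.disjoint_left.mp (hpart₂ B hB B' hB' h) hx hx'

private lemma switch_aux {S : Type*} [Fintype S] [DecidableEq S]
    (𝔖 : Finset (Finset S)) (γ : Finset S → ℚ)
    (hpart₂ : ∀ B ∈ 𝔖, ∀ B' ∈ 𝔖, B ≠ B' → Disjoint B B')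
    (hpart₃ : 𝔖.biUnion id = Finset.univ)
    (hmono : ∀ ⦃C D : Finset S⦄, C ⊆ D → γ C ≤ γ D)
    (hsimple : ∀ C : Finset S, γ C = 0 ∨ γ C = 1)
    (hsingleton : ∀ B ∈ 𝔖,
      (∃ 𝒞 ⊆ 𝔖, B ∉ 𝒞 ∧ γ (𝒞.biUnion id ∪ B) = 1 ∧ γ (𝒞.biUnion id) = 0) → B.card = 1) :
    ∀ n (C X : Finset S), X ∈ 𝔖 → Disjoint C X →
      (((𝔖.filter (fun B' => (B' ∩ C).Nonempty)).biUnion id) \ C).card ≤ n →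
      γ C = 0 → γ (C ∪ X) = 1 →
      ∃ 𝒞 ⊆ 𝔖, X ∉ 𝒞 ∧ γ (𝒞.biUnion id ∪ X) = 1 ∧ γ (𝒞.biUnion id) = 0 := by
  intro n
  induction n with
  | zero =>
    intro C X hX hdisj hcard hC hCX
    -- here the filtered biUnion equals C exactly
    have hsub : ((𝔖.filter (fun B' => (B' ∩ C).Nonempty)).biUnion id) ⊆ C := by
      rw [← Finset.sdiff_eq_empty_iff_subset]
      exact Finset.card_eq_zero.mp (Nat.le_zero.mp hcard)
    have hsup : C ⊆ (𝔖.filter (fun B' => (B' ∩ C).Nonempty)).biUnion id := by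
      intro t ht
      have : t ∈ 𝔖.biUnion id := by rw [hpart₃]; exact Finset.mem_univ t
      obtain ⟨Bt, hBt, htBt⟩ := Finset.mem_biUnion.mp this
      exact Finset.mem_biUnion.mpr ⟨Bt, Finset.mem_filter.mpr ⟨hBt, ⟨t, Finset.mem_inter.mpr ⟨htBt, ht⟩⟩⟩, htBt⟩
    have heq : (𝔖.filter (fun B' => (B' ∩ C).Nonempty)).biUnion id = C :=
      Finset.Subset.antisymm hsub hsup
    refine ⟨𝔖.filter (fun B' => (B' ∩ C).Nonempty), Finset.filter_subset _ _, ?_, ?_, ?_⟩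
    · intro hXmem
      obtain ⟨t, htmem⟩ := (Finset.mem_filter.mp hXmem).2
      rw [Finset.mem_inter] at htmem
      exact Finset.disjoint_left.mp hdisj htmem.2 htmem.1
    · rw [heq]; exact hCX
    · rw [heq]; exact hC
  | succ n ih =>
    intro C X hX hdisj hcard hC hCX
    by_cases hsmall : (((𝔖.filter (fun B' => (B' ∩ C).Nonempty)).biUnion id) \ C).card ≤ n
    · exact ih C X hX hdisj hsmall hC hCX
    · -- the sdiff is nonempty; pick u in it
      have hne : ((((𝔖.filter (fun B' => (B' ∩ C).Nonempty)).biUnion id) \ C)).Nonempty := by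
        rw [← Finset.card_pos]; omega
      obtain ⟨u, hu⟩ := hne
      have huC : u ∉ C := (Finset.mem_sdiff.mp hu).2
      obtain ⟨B', hB'filter, huB'⟩ := Finset.mem_biUnion.mp (Finset.mem_sdiff.mp hu).1
      have hB'𝔖 : B' ∈ 𝔖 := (Finset.mem_filter.mp hB'filter).1
      obtain ⟨t, htmem⟩ := (Finset.mem_filter.mp hB'filter).2
      rw [Finset.mem_inter] at htmem
      have hB'ne : B' ≠ X := by
        intro h
        exact Finset.disjoint_left.mp hdisj htmem.2 (h ▸ htmem.1)
      have huX : u ∉ X := by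
        intro h
        exact Finset.disjoint_left.mp (hpart₂ B' hB'𝔖 X hX hB'ne) huB' h
    -- two cases on γ (insert u C)
      rcases hsimple (insert u C) with h0 | h1
      · -- grow C by u
        have hdisj' : Disjoint (insert u C) X := by
          rw [Finset.disjoint_left]
          intro a ha
          rcases Finset.mem_insert.mp ha with rfl | ha
          · exact huX
          · exact Finset.disjoint_left.mp hdisj ha
        have hfilter_eq : 𝔖.filter (fun B'' => (B'' ∩ (insert u C)).Nonempty)
            = 𝔖.filter (fun B'' => (B'' ∩ C).Nonempty) := by
          apply Finset.filter_congr
          intro B'' hB''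
          constructor
          · rintro ⟨a, ha⟩
            rw [Finset.mem_inter, Finset.mem_insert] at ha
            rcases ha.2 with rfl | haC
            · -- a = u, so B'' = B', which meets C
              have : B'' = B' := block_eq_of_mem hpart₂ hB'' hB'𝔖 ha.1 huB'
              exact ⟨t, Finset.mem_inter.mpr ⟨this ▸ htmem.1, htmem.2⟩⟩
            · exact ⟨a, Finset.mem_inter.mpr ⟨ha.1, haC⟩⟩
          · rintro ⟨a, ha⟩
            rw [Finset.mem_inter] at ha
            exact ⟨a, Finset.mem_inter.mpr ⟨ha.1, Finset.mem_insert_of_mem ha.2⟩⟩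
        have hcard' : (((𝔖.filter (fun B'' => (B'' ∩ (insert u C)).Nonempty)).biUnion id) \ (insert u C)).card ≤ n := by
          rw [hfilter_eq]
          have hsub : ((𝔖.filter (fun B'' => (B'' ∩ C).Nonempty)).biUnion id) \ (insert u C)
              ⊆ (((𝔖.filter (fun B'' => (B'' ∩ C).Nonempty)).biUnion id) \ C).erase u := by
            intro a ha
            rw [Finset.mem_sdiff, Finset.mem_insert] at ha
            push_neg at ha
            exact Finset.mem_erase.mpr ⟨ha.2.1, Finset.mem_sdiff.mpr ⟨ha.1, ha.2.2⟩⟩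
          calc _ ≤ ((((𝔖.filter (fun B'' => (B'' ∩ C).Nonempty)).biUnion id) \ C).erase u).card :=
                Finset.card_le_card hsub
            _ = (((𝔖.filter (fun B'' => (B'' ∩ C).Nonempty)).biUnion id) \ C).card - 1 :=
                Finset.card_erase_of_mem hu
            _ ≤ n := by omega
        have hCX' : γ (insert u C ∪ X) = 1 := by
          rcases hsimple (insert u C ∪ X) with h | h
          · exfalso
            have := hmono (show C ∪ X ⊆ insert u C ∪ X from
              Finset.union_subset_union (Finset.subset_insert u C) (Finset.Subset.refl X))
            rw [hCX, h] at this; linarith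
          · exact h
        exact ih (insert u C) X hX hdisj' hcard' h0 hCX'
      · -- (C, u) is a switching pair against block B'; derive a contradiction
        exfalso
        have hdisj2 : Disjoint (C \ B') B' := Finset.sdiff_disjoint
        have hC2 : γ (C \ B') = 0 := by
          rcases hsimple (C \ B') with h | h
          · exact h
          · exfalso
            have := hmono (Finset.sdiff_subset (s := C) (t := B'))
            rw [hC, h] at this; linarith
        have hCB' : γ ((C \ B') ∪ B') = 1 := by
          rcases hsimple ((C \ B') ∪ B') with h | h
          · exfalso
            have hss : insert u C ⊆ (C \ B') ∪ B' := by
              intro a ha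
              rcases Finset.mem_insert.mp ha with rfl | haC
              · exact Finset.mem_union_right _ huB'
              · by_cases hab : a ∈ B'
                · exact Finset.mem_union_right _ hab
                · exact Finset.mem_union_left _ (Finset.mem_sdiff.mpr ⟨haC, hab⟩)
            have := hmono hss
            rw [h1, h] at this; linarith
          · exact h
        have hcard2 : (((𝔖.filter (fun B'' => (B'' ∩ (C \ B')).Nonempty)).biUnion id) \ (C \ B')).card ≤ n := by
          have hsub : ((𝔖.filter (fun B'' => (B'' ∩ (C \ B')).Nonempty)).biUnion id) \ (C \ B')
              ⊆ (((𝔖.filter (fun B'' => (B'' ∩ C).Nonempty)).biUnion id) \ C).erase u := by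
            intro a ha
            rw [Finset.mem_sdiff] at ha
            obtain ⟨B'', hB''f, haB''⟩ := Finset.mem_biUnion.mp ha.1
            have hB''𝔖 : B'' ∈ 𝔖 := (Finset.mem_filter.mp hB''f).1
            obtain ⟨w, hw⟩ := (Finset.mem_filter.mp hB''f).2
            rw [Finset.mem_inter, Finset.mem_sdiff] at hw
            have hB''ne : B'' ≠ B' := by
              intro h; exact hw.2.2 (h ▸ hw.1)
            have haB'not : a ∉ B' :=
              fun h => Finset.disjoint_left.mp (hpart₂ B'' hB''𝔖 B' hB'𝔖 hB''ne) haB'' h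
            have haC : a ∉ C := by
              intro h
              exact ha.2 (Finset.mem_sdiff.mpr ⟨h, haB'not⟩)
            refine Finset.mem_erase.mpr ⟨fun h => haB'not (h ▸ huB'), Finset.mem_sdiff.mpr ⟨?_, haC⟩⟩
            exact Finset.mem_biUnion.mpr ⟨B'', Finset.mem_filter.mpr
              ⟨hB''𝔖, ⟨w, Finset.mem_inter.mpr ⟨hw.1, hw.2.1⟩⟩⟩, haB''⟩
          calc _ ≤ ((((𝔖.filter (fun B'' => (B'' ∩ C).Nonempty)).biUnion id) \ C).erase u).card :=
                Finset.card_le_card hsub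
            _ = (((𝔖.filter (fun B'' => (B'' ∩ C).Nonempty)).biUnion id) \ C).card - 1 :=
                Finset.card_erase_of_mem hu
            _ ≤ n := by omega
        have hBSP := ih (C \ B') B' hB'𝔖 hdisj2 hcard2 hC2 hCB'
        have hcard1 : B'.card = 1 := hsingleton B' hB'𝔖 hBSP
        -- but B' contains t ∈ C and u ∉ C, two distinct elements
        have htu : t ≠ u := fun h => huC (h ▸ htmem.2)
        have : 2 ≤ B'.card := by
          have : ({t, u} : Finset S) ⊆ B' := by
            intro a ha
            rcases Finset.mem_insert.mp ha with rfl | ha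
            · exact htmem.1
            · rw [Finset.mem_singleton] at ha; exact ha ▸ huB'
          calc 2 = ({t, u} : Finset S).card := (Finset.card_pair htu).symm
            _ ≤ B'.card := Finset.card_le_card this
        omega

/-- If every block admitting a block-switching pair is a singleton, then a state has a
(state-level) switching pair iff its block has a block-switching pair. -/
theorem singleton_switching_pair_iff_block_switching_pair
    {S : Type*} [Fintype S] [DecidableEq S]
    (𝔖 : Finset (Finset S)) (γ : Finset S → ℚ)
    (hpart₁ : ∀ B ∈ 𝔖, B.Nonempty)
    (hpart₂ : ∀ B ∈ 𝔖, ∀ B' ∈ 𝔖, B ≠ B' → Disjoint B B')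
    (hpart₃ : 𝔖.biUnion id = Finset.univ)
    (hmono : ∀ ⦃C D : Finset S⦄, C ⊆ D → γ C ≤ γ D)
    (hsimple : ∀ C : Finset S, γ C = 0 ∨ γ C = 1)
    (hsingleton : ∀ B ∈ 𝔖,
      (∃ 𝒞 ⊆ 𝔖, B ∉ 𝒞 ∧ γ (𝒞.biUnion id ∪ B) = 1 ∧ γ (𝒞.biUnion id) = 0) → B.card = 1)
    (s : S) (B : Finset S) (hB : B ∈ 𝔖) (hsB : s ∈ B) :
    (∃ C : Finset S, s ∉ C ∧ γ (insert s C) = 1 ∧ γ C = 0) ↔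
    (∃ 𝒞 ⊆ 𝔖, B ∉ 𝒞 ∧ γ (𝒞.biUnion id ∪ B) = 1 ∧ γ (𝒞.biUnion id) = 0) := by
  constructor
  · rintro ⟨C, hsC, h1, h0⟩
    -- pass to C \ B, which is disjoint from B
    have hdisj : Disjoint (C \ B) B := Finset.sdiff_disjoint
    have hC2 : γ (C \ B) = 0 := by
      rcases hsimple (C \ B) with h | h
      · exact h
      · exfalso
        have := hmono (Finset.sdiff_subset (s := C) (t := B))
        rw [h0, h] at this; linarith
    have hCB : γ ((C \ B) ∪ B) = 1 := by
      rcases hsimple ((C \ B) ∪ B) with h | h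
      · exfalso
        have hss : insert s C ⊆ (C \ B) ∪ B := by
          intro a ha
          rcases Finset.mem_insert.mp ha with rfl | haC
          · exact Finset.mem_union_right _ hsB
          · by_cases hab : a ∈ B
            · exact Finset.mem_union_right _ hab
            · exact Finset.mem_union_left _ (Finset.mem_sdiff.mpr ⟨haC, hab⟩)
        have := hmono hss
        rw [h1, h] at this; linarith
      · exact h
    exact switch_aux 𝔖 γ hpart₂ hpart₃ hmono hsimple hsingleton
      (((𝔖.filter (fun B' => (B' ∩ (C \ B)).Nonempty)).biUnion id) \ (C \ B)).card
      (C \ B) B hB hdisj le_rfl hC2 hCB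
  · rintro ⟨𝒞, h𝒞, hB𝒞, h1, h0⟩
    have hcard : B.card = 1 := hsingleton B hB ⟨𝒞, h𝒞, hB𝒞, h1, h0⟩
    have hBeq : B = {s} := by
      obtain ⟨x, hx⟩ := Finset.card_eq_one.mp hcard
      rw [hx] at hsB
      rw [Finset.mem_singleton] at hsB
      rw [hx, hsB]
    refine ⟨𝒞.biUnion id, ?_, ?_, h0⟩
    · intro hs
      obtain ⟨B', hB'𝒞, hsB'⟩ := Finset.mem_biUnion.mp hs
      have : B = B' := block_eq_of_mem hpart₂ hB (h𝒞 hB'𝒞) hsB hsB'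
      exact hB𝒞 (this ▸ hB'𝒞)
    · have : insert s (𝒞.biUnion id) = 𝒞.biUnion id ∪ B := by
        rw [hBeq]
        ext a
        simp [Finset.mem_insert, Finset.mem_union, or_comm]
      rw [this]
      exact h1
end

section
/- The refinement algorithm terminates: if in each iteration at least one non-singleton block with a block-switching pair is refined into at least two nonempty blocks, then after finitely many iterations every block admitting a block-switching pair is a singleton, and the algorithm outputs exactly the set of states with positive responsibility. -/
/-- Block `B` of partition `𝔖` admits a block-switching pair in game `γ`. -/
def HasBSP {S : Type*} [DecidableEq S] (γ : Finset S → ℚ) (𝔖 : Finset (Finset S))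
    (B : Finset S) : Prop :=
  B ∈ 𝔖 ∧ ∃ 𝒞 ⊆ 𝔖, B ∉ 𝒞 ∧ γ (𝒞.biUnion id ∪ B) = 1 ∧ γ (𝒞.biUnion id) = 0

lemma coeff_pos {S : Type*} [Fintype S] (C : Finset S) :
    (0:ℚ) < (((Fintype.card S - C.card - 1).factorial * C.card.factorial : ℚ) /
      ((Fintype.card S).factorial : ℚ)) := by
  apply div_pos
  · exact_mod_cast Nat.mul_pos (Nat.factorial_pos _) (Nat.factorial_pos _)
  · exact_mod_cast Nat.factorial_pos _

lemma shapley_pos_of {S : Type*} [Fintype S] [DecidableEq S] (γ : Finset S → ℚ)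
    (hmono : ∀ ⦃C D : Finset S⦄, C ⊆ D → γ C ≤ γ D)
    (s : S) (U : Finset S) (hsU : s ∉ U) (h0 : γ U = 0) (h1 : γ (insert s U) = 1) :
    0 < shapley γ s := by
  unfold shapley
  apply Finset.sum_pos'
  · intro C _
    exact mul_nonneg (le_of_lt (coeff_pos C))
      (sub_nonneg.mpr (hmono (Finset.subset_insert s C)))
  · refine ⟨U, Finset.mem_powerset.mpr fun t ht =>
      Finset.mem_erase.mpr ⟨fun e => hsU (e ▸ ht), Finset.mem_univ t⟩, ?_⟩
    rw [h0, h1]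
    simpa using coeff_pos U

lemma shapley_pos_exists {S : Type*} [Fintype S] [DecidableEq S] (γ : Finset S → ℚ)
    {s : S} (h : 0 < shapley γ s) : ∃ C : Finset S, s ∉ C ∧ γ C < γ (insert s C) := by
  by_contra hc
  push_neg at hc
  unfold shapley at h
  have hle : ∀ C ∈ (Finset.univ.erase s).powerset,
      (((Fintype.card S - C.card - 1).factorial * C.card.factorial : ℚ) /
      ((Fintype.card S).factorial : ℚ)) * (γ (insert s C) - γ C) ≤ 0 := by
    intro C hC
    have hsC : s ∉ C := fun h' =>
      (Finset.mem_erase.mp (Finset.mem_powerset.mp hC h')).1 rfl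
    have h2 := hc C hsC
    exact mul_nonpos_of_nonneg_of_nonpos (le_of_lt (coeff_pos C)) (by linarith)
  have := Finset.sum_nonpos hle
  linarith

/-- Removing blocks without a block-switching pair does not change the value. -/
lemma gamma_reduce {S : Type*} [DecidableEq S] (γ : Finset S → ℚ)
    (hmono : ∀ ⦃C D : Finset S⦄, C ⊆ D → γ C ≤ γ D)
    (hsimple : ∀ C : Finset S, γ C = 0 ∨ γ C = 1)
    (𝔖 : Finset (Finset S)) :
    ∀ 𝒞, 𝒞 ⊆ 𝔖 → ∀ 𝒟, 𝒟 ⊆ 𝒞 → (∀ D ∈ 𝒞, D ∉ 𝒟 → ¬ HasBSP γ 𝔖 D) →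
      γ (𝒞.biUnion id) = γ (𝒟.biUnion id) := by
  intro 𝒞
  induction 𝒞 using Finset.strongInduction with
  | _ 𝒞 ih =>
    intro h𝒞 𝒟 h𝒟 hnull
    by_cases hall : 𝒞 ⊆ 𝒟
    · rw [Finset.Subset.antisymm hall h𝒟]
    · obtain ⟨D, hD, hD'⟩ := Finset.not_subset.mp hall
      have hnD := hnull D hD hD'
      have hb : 𝒞.biUnion id = (𝒞.erase D).biUnion id ∪ D := by
        conv_lhs => rw [← Finset.insert_erase hD]
        rw [Finset.biUnion_insert]
        exact Finset.union_comm _ _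
      have step : γ (𝒞.biUnion id) = γ ((𝒞.erase D).biUnion id) := by
        set U := (𝒞.erase D).biUnion id with hU
        rw [hb]
        rcases hsimple U with h | h
        · rcases hsimple (U ∪ D) with h' | h'
          · rw [h, h']
          · exact absurd ⟨h𝒞 hD, 𝒞.erase D, (Finset.erase_subset _ _).trans h𝒞,
              Finset.notMem_erase _ _, h', h⟩ hnD
        · rcases hsimple (U ∪ D) with h' | h'
          · have := hmono (Finset.subset_union_left : U ⊆ U ∪ D)
            rw [h, h'] at this; linarith
          · rw [h, h']
      rw [step]
      exact ih (𝒞.erase D) (Finset.erase_ssubset hD)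
        ((Finset.erase_subset _ _).trans h𝒞) 𝒟
        (Finset.subset_erase.mpr ⟨h𝒟, hD'⟩)
        (fun E hE hE' => hnull E (Finset.erase_subset _ _ hE) hE')

/-- Termination and correctness of the refinement algorithm: if whenever some
non-singleton block has a block-switching pair, the partition is properly refined
(strictly more blocks, each new block contained in an old one), then after finitely
many iterations all blocks with block-switching pairs are singletons, and the output
`{s | [s] ∈ HasBSP}` is exactly the set of states with positive responsibility. -/
theorem refinement_terminates_and_correct {S : Type*} [Fintype S] [DecidableEq S]
    (γ : Finset S → ℚ)
    (hmono : ∀ ⦃C D : Finset S⦄, C ⊆ D → γ C ≤ γ D)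
    (hsimple : ∀ C : Finset S, γ C = 0 ∨ γ C = 1)
    (P : ℕ → Finset (Finset S))
    (hpart : ∀ n, (∀ B ∈ P n, B.Nonempty) ∧
      (∀ B ∈ P n, ∀ B' ∈ P n, B ≠ B' → Disjoint B B') ∧
      (P n).biUnion id = Finset.univ)
    (hstep : ∀ n, (∃ B ∈ P n, 1 < B.card ∧ HasBSP γ (P n) B) →
      ((P n).card < (P (n + 1)).card ∧ ∀ B' ∈ P (n + 1), ∃ B ∈ P n, B' ⊆ B)) :
    ∃ N, (∀ B : Finset S, HasBSP γ (P N) B → B.card = 1) ∧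
      ∀ s : S, (∃ B : Finset S, HasBSP γ (P N) B ∧ s ∈ B) ↔ 0 < shapley γ s := by
  classical
  -- number of blocks is bounded by the number of states
  have hbound : ∀ n, (P n).card ≤ Fintype.card S := by
    intro n
    obtain ⟨h1, h2, h3⟩ := hpart n
    calc (P n).card = ∑ _B ∈ P n, 1 := by rw [Finset.card_eq_sum_ones]
      _ ≤ ∑ B ∈ P n, B.card :=
          Finset.sum_le_sum fun B hB => (h1 B hB).card_pos
      _ = ((P n).biUnion id).card := (Finset.card_biUnion h2).symm
      _ = Fintype.card S := by rw [h3]; exact Finset.card_univ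
  -- termination
  have hterm : ∃ N, ¬ ∃ B ∈ P N, 1 < B.card ∧ HasBSP γ (P N) B := by
    by_contra hc
    push_neg at hc
    have hg : ∀ n, n ≤ (P n).card := by
      intro n
      induction n with
      | zero => exact Nat.zero_le _
      | succ n ih =>
        have := (hstep n (by
          obtain ⟨B, hB, h⟩ := hc n
          exact ⟨B, hB, h⟩)).1
        omega
    have h1 := hg (Fintype.card S + 1)
    have h2 := hbound (Fintype.card S + 1)
    omega
  obtain ⟨N, hN⟩ := hterm
  push_neg at hN
  obtain ⟨hne, hdisj, hcover⟩ := hpart N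
  -- uniqueness of blocks
  have huniq : ∀ B ∈ P N, ∀ D ∈ P N, ∀ t : S, t ∈ B → t ∈ D → B = D := by
    intro B hB D hD t htB htD
    by_contra hne'
    exact Finset.disjoint_left.mp (hdisj B hB D hD hne') htB htD
  -- part 1
  have part1 : ∀ B : Finset S, HasBSP γ (P N) B → B.card = 1 := by
    intro B hB
    have hmem := hB.1
    have hpos := (hne B hmem).card_pos
    have : ¬ 1 < B.card := fun h => hN B hmem h hB
    omega
  refine ⟨N, part1, fun s => ⟨?_, ?_⟩⟩
  · -- forward: block with BSP containing s gives positive Shapley value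
    rintro ⟨B, hBSP, hsB⟩
    obtain ⟨a, ha⟩ := Finset.card_eq_one.mp (part1 B hBSP)
    have hsa : a = s := by
      rw [ha] at hsB; exact (Finset.mem_singleton.mp hsB).symm
    subst hsa
    obtain ⟨hBmem, 𝒞, h𝒞, hBnot, h1, h0⟩ := hBSP
    set U := 𝒞.biUnion id with hU
    have hsU : a ∉ U := by
      intro h
      obtain ⟨D, hD, hsD⟩ := Finset.mem_biUnion.mp h
      have hDm := h𝒞 hD
      have hne' : D ≠ B := fun e => hBnot (e ▸ hD)
      rw [ha] at hBmem
      exact Finset.disjoint_left.mp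
        (hdisj D hDm {a} hBmem (by rw [← ha]; exact hne')) hsD (Finset.mem_singleton_self a)
    have h1' : γ (insert a U) = 1 := by
      rw [← h1, ha, Finset.insert_eq, Finset.union_comm]
    exact shapley_pos_of γ hmono a U hsU h0 h1'
  · -- backward: positive Shapley value gives a BSP block containing s
    intro hpos
    obtain ⟨C, hsC, hlt⟩ := shapley_pos_exists γ hpos
    have h0 : γ C = 0 := by
      rcases hsimple C with h | h
      · exact h
      · rcases hsimple (insert s C) with h' | h' <;> rw [h, h'] at hlt <;> linarith
    have h1 : γ (insert s C) = 1 := by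
      rcases hsimple (insert s C) with h | h
      · rw [h0, h] at hlt; linarith
      · exact h
    obtain ⟨B, hBm, hsB⟩ := Finset.mem_biUnion.mp
      (by rw [hcover]; exact Finset.mem_univ s : s ∈ (P N).biUnion id)
    by_cases hB : HasBSP γ (P N) B
    · exact ⟨B, hB, hsB⟩
    exfalso
    set 𝒞p := (P N).filter (fun D => (D ∩ insert s C).Nonempty) with h𝒞p
    set 𝒞m := (P N).filter (fun D => D ⊆ C) with h𝒞m
    set 𝒟 := (P N).filter (fun D => HasBSP γ (P N) D ∧ D ⊆ C) with h𝒟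
    -- γ on 𝒞p is 1
    have hUp : insert s C ⊆ 𝒞p.biUnion id := by
      intro t ht
      obtain ⟨D, hD, htD⟩ := Finset.mem_biUnion.mp
        (by rw [hcover]; exact Finset.mem_univ t : t ∈ (P N).biUnion id)
      exact Finset.mem_biUnion.mpr ⟨D, Finset.mem_filter.mpr
        ⟨hD, ⟨t, Finset.mem_inter.mpr ⟨htD, ht⟩⟩⟩, htD⟩
    have h1p : γ (𝒞p.biUnion id) = 1 := by
      rcases hsimple (𝒞p.biUnion id) with h | h
      · have := hmono hUp; rw [h1, h] at this; linarith
      · exact h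
    -- γ on 𝒞m is 0
    have hUm : 𝒞m.biUnion id ⊆ C := by
      intro t ht
      obtain ⟨D, hD, htD⟩ := Finset.mem_biUnion.mp ht
      exact (Finset.mem_filter.mp hD).2 htD
    have h0m : γ (𝒞m.biUnion id) = 0 := by
      rcases hsimple (𝒞m.biUnion id) with h | h
      · exact h
      · have := hmono hUm; rw [h, h0] at this; linarith
    -- reduce both to 𝒟
    have h𝒟p : 𝒟 ⊆ 𝒞p := by
      intro D hD
      obtain ⟨hDm, hBSP, hDC⟩ := Finset.mem_filter.mp hD
      obtain ⟨t, ht⟩ := hne D hDm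
      exact Finset.mem_filter.mpr ⟨hDm, ⟨t, Finset.mem_inter.mpr
        ⟨ht, Finset.mem_insert_of_mem (hDC ht)⟩⟩⟩
    have h𝒟m : 𝒟 ⊆ 𝒞m := by
      intro D hD
      obtain ⟨hDm, _, hDC⟩ := Finset.mem_filter.mp hD
      exact Finset.mem_filter.mpr ⟨hDm, hDC⟩
    have hnp : ∀ D ∈ 𝒞p, D ∉ 𝒟 → ¬ HasBSP γ (P N) D := by
      intro D hD hD' hBSP
      apply hD'
      obtain ⟨hDm, hint⟩ := Finset.mem_filter.mp hD
      obtain ⟨a, ha⟩ := Finset.card_eq_one.mp (part1 D hBSP)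
      obtain ⟨t, ht⟩ := hint
      obtain ⟨htD, htC⟩ := Finset.mem_inter.mp ht
      have hta : t = a := by rw [ha] at htD; exact Finset.mem_singleton.mp htD
      subst hta
      have htC' : t ∈ C := by
        rcases Finset.mem_insert.mp htC with h | h
        · subst h
          exact absurd (huniq D hDm B hBm t htD hsB ▸ hBSP) hB
        · exact h
      refine Finset.mem_filter.mpr ⟨hDm, hBSP, ?_⟩
      rw [ha]
      exact Finset.singleton_subset_iff.mpr htC'
    have hnm : ∀ D ∈ 𝒞m, D ∉ 𝒟 → ¬ HasBSP γ (P N) D := by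
      intro D hD hD' hBSP
      obtain ⟨hDm, hDC⟩ := Finset.mem_filter.mp hD
      exact hD' (Finset.mem_filter.mpr ⟨hDm, hBSP, hDC⟩)
    have e1 := gamma_reduce γ hmono hsimple (P N) 𝒞p (Finset.filter_subset _ _) 𝒟 h𝒟p hnp
    have e2 := gamma_reduce γ hmono hsimple (P N) 𝒞m (Finset.filter_subset _ _) 𝒟 h𝒟m hnm
    rw [h1p] at e1
    rw [h0m] at e2
    rw [← e1] at e2
    norm_num at e2
end

section
/- In a turn-based two-player game on a finite graph with a safety, reachability, Büchi, or parity objective, if (C, B) is a block-switching pair (Player Sat wins controlling C ∪ B but loses controlling only C), then the set Δ = Win(G[C ∪ B]) \ Win(G[C]) intersects B; in particular Player Sat also wins when controlling C ∪ (B ∩ Δ). -/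
/-- Player Sat's winning region when controlling the states in `C`. -/
def WinSet {S : Type*} (tr : S → S → Prop) (C : Set S) (Ω : (ℕ → S) → Prop) : Set S :=
  {s | Wins tr C Ω s}

/-- `Δ = Win(G[C ∪ B]) \ Win(G[C])`. -/
def Delta {S : Type*} (tr : S → S → Prop) (Ω : (ℕ → S) → Prop) (C B : Set S) : Set S :=
  WinSet tr (C ∪ B) Ω \ WinSet tr C Ω

/-- The frontier `Fr(B, C)`: states of `B ∩ Δ` with a transition leaving `Δ`. -/
def Frontier {S : Type*} (tr : S → S → Prop) (Ω : (ℕ → S) → Prop) (C B : Set S) : Set S :=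
  {s | s ∈ Delta tr Ω C B ∩ B ∧ ∃ t, tr s t ∧ t ∉ Delta tr Ω C B}

/-- The parity objective for colouring `c`: the maximal colour among the states
visited infinitely often is even. -/
def ParityObj {S : Type*} (c : S → ℕ) : (ℕ → S) → Prop := fun π =>
  ∃ s : S, (∀ i, ∃ j, i ≤ j ∧ π j = s) ∧ Even (c s) ∧
    ∀ t : S, (∀ i, ∃ j, i ≤ j ∧ π j = t) → c t ≤ c s

section BlockSwitch

variable {S : Type*}

private lemma wins_mono_s11 {tr : S → S → Prop} {Ω : (ℕ → S) → Prop} {C C' : Set S}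
    (h : C ⊆ C') {s : S} (hw : Wins tr C Ω s) : Wins tr C' Ω s := by
  obtain ⟨σ, hσ, hwin⟩ := hw
  exact ⟨σ, hσ, fun π h0 hπ => hwin π h0 fun i => ⟨(hπ i).1, fun hi => (hπ i).2 (h hi)⟩⟩

/-- Guarded reachability under strategy `σ` with control set `C`. -/
private def GReach (tr : S → S → Prop) (G : S → Prop) (σ : S → S) (C : Set S) (s t : S) :
    Prop :=
  ∃ (k : ℕ) (π : ℕ → S), π 0 = s ∧ π k = t ∧
    (∀ i < k, tr (π i) (π (i + 1)) ∧ (π i ∈ C → π (i + 1) = σ (π i))) ∧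
    (∀ i < k, G (π i))

/-- If `σ` wins from `s` and `t` is guarded-reachable from `s` under `σ`, then `σ` wins
from `t`. -/
private lemma transfer {tr : S → S → Prop} {Ω : (ℕ → S) → Prop} {G : S → Prop}
    (A2 : ∀ (π : ℕ → S) (k : ℕ), Ω π → (∀ i < k, G (π i)) → Ω (fun n => π (n + k)))
    {σ : S → S} {C : Set S} {s t : S}
    (hwin : ∀ π : ℕ → S, π 0 = s →
      (∀ i, tr (π i) (π (i + 1)) ∧ (π i ∈ C → π (i + 1) = σ (π i))) → Ω π)
    (hr : GReach tr G σ C s t) :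
    ∀ π : ℕ → S, π 0 = t →
      (∀ i, tr (π i) (π (i + 1)) ∧ (π i ∈ C → π (i + 1) = σ (π i))) → Ω π := by
  obtain ⟨k, ρ, h0, hk, hfin, hg⟩ := hr
  intro π hπ0 hπ
  classical
  set χ : ℕ → S := fun n => if n < k then ρ n else π (n - k) with hχdef
  have hχlt : ∀ n, n < k → χ n = ρ n := fun n hn => if_pos hn
  have hχge : ∀ n, k ≤ n → χ n = π (n - k) := fun n hn => if_neg (by omega)
  have hχ0 : χ 0 = s := by
    by_cases h : 0 < k
    · rw [hχlt 0 h, h0]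
    · have hk0 : k = 0 := by omega
      rw [hχge 0 (by omega)]
      have h00 : (0 : ℕ) - k = 0 := by omega
      rw [h00, hπ0, ← hk, hk0, h0]
  have hχplay : ∀ i, tr (χ i) (χ (i + 1)) ∧ (χ i ∈ C → χ (i + 1) = σ (χ i)) := by
    intro i
    rcases lt_trichotomy (i + 1) k with h | h | h
    · rw [hχlt i (by omega), hχlt (i + 1) h]; exact hfin i (by omega)
    · have h1 : χ (i + 1) = ρ (i + 1) := by
        rw [hχge (i + 1) (by omega)]
        have : i + 1 - k = 0 := by omega
        rw [this, hπ0, ← hk, h]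
      rw [hχlt i (by omega), h1]; exact hfin i (by omega)
    · rw [hχge i (by omega), hχge (i + 1) (by omega)]
      have : i + 1 - k = (i - k) + 1 := by omega
      rw [this]; exact hπ (i - k)
  have hΩχ := hwin χ hχ0 hχplay
  have hGχ : ∀ i < k, G (χ i) := by intro i hi; rw [hχlt i hi]; exact hg i hi
  have h2 := A2 χ k hΩχ hGχ
  have heq : (fun n => χ (n + k)) = π := by
    funext n
    rw [hχge (n + k) (by omega)]
    congr 1
    omega
  rwa [heq] at h2

/-- Removing control of a *losing* state `b` keeps `init` winning. -/
private lemma lemA {tr : S → S → Prop} {Ω : (ℕ → S) → Prop} {G : S → Prop}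
    (A1 : ∀ π : ℕ → S, (∃ i, ¬ G (π i)) → Ω π)
    (A2 : ∀ (π : ℕ → S) (k : ℕ), Ω π → (∀ i < k, G (π i)) → Ω (fun n => π (n + k)))
    {C B : Set S} {b init : S}
    (hbnw : ¬ Wins tr (C ∪ B) Ω b)
    (h : Wins tr (C ∪ B) Ω init) : Wins tr (C ∪ (B \ {b})) Ω init := by
  classical
  obtain ⟨σ, hσ, hwin⟩ := h
  refine ⟨σ, hσ, fun π h0 hπ => ?_⟩
  by_cases hgood : ∀ i, G (π i)
  · by_cases hb : ∃ i, π i = b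
    · exfalso
      apply hbnw
      have hk := Nat.find_spec hb
      refine ⟨σ, hσ, transfer A2 hwin ⟨Nat.find hb, π, h0, hk, fun i hi => ?_,
        fun i hi => hgood i⟩⟩
      refine ⟨(hπ i).1, fun hmem => (hπ i).2 ?_⟩
      rcases hmem with hc | hB
      · exact Or.inl hc
      · exact Or.inr ⟨hB, Nat.find_min hb hi⟩
    · push_neg at hb
      apply hwin π h0
      intro i
      refine ⟨(hπ i).1, fun hmem => (hπ i).2 ?_⟩
      rcases hmem with hc | hB
      · exact Or.inl hc
      · exact Or.inr ⟨hB, hb i⟩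
  · push_neg at hgood; exact A1 π hgood

/-- Removing control of an *already winning* (with control `C`) state `b` keeps `init`
winning. -/
private lemma lemB {tr : S → S → Prop} {Ω : (ℕ → S) → Prop} {G P : S → Prop}
    (A1 : ∀ π : ℕ → S, (∃ i, ¬ G (π i)) → Ω π)
    (A2 : ∀ (π : ℕ → S) (k : ℕ), Ω π → (∀ i < k, G (π i)) → Ω (fun n => π (n + k)))
    (A3 : ∀ (π : ℕ → S) (k : ℕ), (∀ i < k, P (π i)) → Ω (fun n => π (n + k)) → Ω π)
    (A4 : ∀ s : S, (∃ π : ℕ → S, π 0 = s ∧ Ω π) → P s)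
    {C B : Set S} {b init : S} (hbC : b ∉ C)
    (hbw : Wins tr C Ω b)
    (h : Wins tr (C ∪ B) Ω init) : Wins tr (C ∪ (B \ {b})) Ω init := by
  classical
  obtain ⟨σ0, hσ0, hwin0⟩ := h
  obtain ⟨σb, hσb, hwinb⟩ := hbw
  set R : Set S := {t | GReach tr G σb C b t} with hRdef
  have hbR : b ∈ R := ⟨0, fun _ => b, rfl, rfl, by omega, by omega⟩
  refine ⟨fun u => if u ∈ R then σb u else σ0 u, fun s => ?_, ?_⟩
  · by_cases h : s ∈ R <;> simp only [h, if_pos, if_neg, if_true, if_false] <;>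
      first | exact hσb s | exact hσ0 s
  intro π h0 hπ
  by_cases hgood : ∀ i, G (π i)
  swap
  · push_neg at hgood; exact A1 π hgood
  have hmemconv : ∀ i, π i ∉ R → π i ∈ C ∪ B → π i ∈ C ∪ (B \ {b}) := by
    intro i hiR hmem
    rcases hmem with hc | hB
    · exact Or.inl hc
    · exact Or.inr ⟨hB, fun he => hiR (by rw [Set.mem_singleton_iff] at he; rw [he]; exact hbR)⟩
  by_cases hR : ∃ i, π i ∈ R
  · set k := Nat.find hR with hkdef
    have hkR : π k ∈ R := Nat.find_spec hR
    have hlt : ∀ i < k, π i ∉ R := fun i hi => Nat.find_min hR hi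
    -- the prefix is a σ0-consistent play w.r.t. C ∪ B
    have hpre : ∀ i < k, tr (π i) (π (i + 1)) ∧ (π i ∈ C ∪ B → π (i + 1) = σ0 (π i)) := by
      intro i hi
      refine ⟨(hπ i).1, fun hmem => ?_⟩
      have := (hπ i).2 (hmemconv i (hlt i hi) hmem)
      rw [this]; exact if_neg (hlt i hi)
    -- once in R, the play stays in R
    have hRstep : ∀ j, π j ∈ R → π (j + 1) ∈ R := by
      intro j hj
      obtain ⟨m, ρ, hρ0, hρm, hfin, hg⟩ := hj
      refine ⟨m + 1, fun n => if n ≤ m then ρ n else π (j + 1), by simp [hρ0], by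
        simp, ?_, ?_⟩
      · intro i hi
        by_cases him : i < m
        · simp only [if_pos (by omega : i ≤ m), if_pos (by omega : i + 1 ≤ m)]
          exact hfin i him
        · have hieq : i = m := by omega
          subst hieq
          simp only [if_pos (le_refl i), if_neg (by omega : ¬ i + 1 ≤ i), hρm]
          refine ⟨(hπ j).1, fun hc => ?_⟩
          have := (hπ j).2 (Or.inl hc)
          rw [this]
          exact if_pos ⟨_, ρ, hρ0, hρm, hfin, hg⟩
      · intro i hi
        by_cases him : i < m
        · simp only [if_pos (by omega : i ≤ m)]; exact hg i him
        · have hieq : i = m := by omega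
          subst hieq
          simp only [if_pos (le_refl i), hρm]
          exact hgood j
    have hge : ∀ n, π (n + k) ∈ R := by
      intro n
      induction n with
      | zero => simpa using hkR
      | succ n ih =>
          have := hRstep (n + k) ih
          have he : n + k + 1 = n + 1 + k := by omega
          rwa [he] at this
    -- the tail is a σb-consistent play w.r.t. C
    have htail : ∀ n, tr (π (n + k)) (π (n + k + 1)) ∧
        (π (n + k) ∈ C → π (n + k + 1) = σb (π (n + k))) := by
      intro n
      refine ⟨(hπ (n + k)).1, fun hc => ?_⟩
      have := (hπ (n + k)).2 (Or.inl hc)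
      rw [this]; exact if_pos (hge n)
    have hΩtail : Ω (fun n => π (n + k)) := by
      refine transfer A2 hwinb hkR (fun n => π (n + k)) (by simp) ?_
      intro n
      have he : n + 1 + k = n + k + 1 := by omega
      refine ⟨?_, fun hc => ?_⟩
      · show tr (π (n + k)) (π (n + 1 + k)); rw [he]; exact (htail n).1
      · show π (n + 1 + k) = σb (π (n + k)); rw [he]; exact (htail n).2 hc
    -- P holds along the prefix
    have hP : ∀ i < k, P (π i) := by
      intro i hi
      have hreach : GReach tr G σ0 (C ∪ B) init (π i) :=
        ⟨i, π, h0, rfl, fun j hj => hpre j (by omega), fun j hj => hgood j⟩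
      have hwini := transfer A2 hwin0 hreach
      refine A4 _ ⟨fun n => σ0^[n] (π i), rfl, hwini _ rfl ?_⟩
      intro n
      constructor
      · rw [Function.iterate_succ_apply']; exact hσ0 _
      · intro _; rw [Function.iterate_succ_apply']
    exact A3 π k hP hΩtail
  · push_neg at hR
    apply hwin0 π h0
    intro i
    refine ⟨(hπ i).1, fun hmem => ?_⟩
    have := (hπ i).2 (hmemconv i (hR i) hmem)
    rw [this]; exact if_neg (hR i)

private lemma main_core {S : Type*} [Fintype S] {tr : S → S → Prop} {Ω : (ℕ → S) → Prop}
    {G P : S → Prop}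
    (A1 : ∀ π : ℕ → S, (∃ i, ¬ G (π i)) → Ω π)
    (A2 : ∀ (π : ℕ → S) (k : ℕ), Ω π → (∀ i < k, G (π i)) → Ω (fun n => π (n + k)))
    (A3 : ∀ (π : ℕ → S) (k : ℕ), (∀ i < k, P (π i)) → Ω (fun n => π (n + k)) → Ω π)
    (A4 : ∀ s : S, (∃ π : ℕ → S, π 0 = s ∧ Ω π) → P s)
    {C : Set S} {init : S} (hlose : ¬ Wins tr C Ω init) :
    ∀ (n : ℕ) (B : Set S), B.ncard = n → Wins tr (C ∪ B) Ω init →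
      Wins tr (C ∪ (B ∩ Delta tr Ω C B)) Ω init := by
  intro n
  induction n using Nat.strong_induction_on with
  | _ n ih =>
    intro B hcard hwin
    by_cases hsub : ∀ b ∈ B, b ∈ C ∪ Delta tr Ω C B
    · have heq : C ∪ B ∩ Delta tr Ω C B = C ∪ B := by
        ext x
        constructor
        · rintro (hx | hx)
          · exact Or.inl hx
          · exact Or.inr hx.1
        · rintro (hx | hx)
          · exact Or.inl hx
          · rcases hsub x hx with hc | hd
            · exact Or.inl hc
            · exact Or.inr ⟨hx, hd⟩
      rw [heq]
      exact hwin
    · push_neg at hsub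
      obtain ⟨b, hbB, hb⟩ := hsub
      have hbC : b ∉ C := fun h => hb (Or.inl h)
      have hbΔ : b ∉ Delta tr Ω C B := fun h => hb (Or.inr h)
      have hwin' : Wins tr (C ∪ (B \ {b})) Ω init := by
        by_cases hbw : Wins tr (C ∪ B) Ω b
        · have hbwc : Wins tr C Ω b := by
            by_contra hc
            exact hbΔ ⟨hbw, hc⟩
          exact lemB A1 A2 A3 A4 hbC hbwc hwin
        · exact lemA A1 A2 hbw hwin
      have hΔsub : Delta tr Ω C (B \ {b}) ⊆ Delta tr Ω C B := by
        intro x hx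
        exact ⟨wins_mono_s11 (Set.union_subset_union_right C Set.diff_subset) hx.1, hx.2⟩
      have hlt : (B \ {b}).ncard < n := by
        rw [← hcard]
        exact Set.ncard_diff_singleton_lt_of_mem hbB (Set.toFinite B)
      have hres := ih _ hlt (B \ {b}) rfl hwin'
      refine wins_mono_s11 ?_ hres
      apply Set.union_subset_union_right
      exact Set.inter_subset_inter Set.diff_subset (hΔsub)

end BlockSwitch

/-- For safety, reachability, Büchi or parity objectives: if `(C, B)` is a
block-switching pair, then `Δ = Win(G[C ∪ B]) \\ Win(G[C])` intersects `B`, and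
Player Sat still wins when controlling only `C ∪ (B ∩ Δ)`. -/
theorem delta_intersects_block {S : Type*} [Fintype S]
    (tr : S → S → Prop) (htotal : ∀ s, ∃ t, tr s t)
    (Ω : (ℕ → S) → Prop)
    (hΩ : (∃ F : Set S, Ω = SafetyObj F) ∨ (∃ F : Set S, Ω = ReachObj F) ∨
      (∃ F : Set S, Ω = BuchiObj F) ∨ (∃ c : S → ℕ, Ω = ParityObj c))
    (init : S) (C B : Set S)
    (hwin : init ∈ WinSet tr (C ∪ B) Ω)
    (hlose : init ∉ WinSet tr C Ω) :
    (Delta tr Ω C B ∩ B).Nonempty ∧ Wins tr (C ∪ (B ∩ Delta tr Ω C B)) Ω init := by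
  have key : ∃ (G P : S → Prop),
      (∀ π : ℕ → S, (∃ i, ¬ G (π i)) → Ω π) ∧
      (∀ (π : ℕ → S) (k : ℕ), Ω π → (∀ i < k, G (π i)) → Ω (fun n => π (n + k))) ∧
      (∀ (π : ℕ → S) (k : ℕ), (∀ i < k, P (π i)) → Ω (fun n => π (n + k)) → Ω π) ∧
      (∀ s : S, (∃ π : ℕ → S, π 0 = s ∧ Ω π) → P s) := by
    rcases hΩ with ⟨F, rfl⟩ | ⟨F, rfl⟩ | ⟨F, rfl⟩ | ⟨c, rfl⟩
    · -- safety
      refine ⟨fun _ => True, fun s => s ∉ F, ?_, ?_, ?_, ?_⟩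
      · rintro π ⟨i, h⟩; exact absurd trivial h
      · intro π k h _ n; exact h (n + k)
      · intro π k hP h m
        rcases lt_or_ge m k with hm | hm
        · exact hP m hm
        · have : m = (m - k) + k := by omega
          rw [this]; exact h (m - k)
      · rintro s ⟨π, h0, h⟩; have := h 0; rwa [h0] at this
    · -- reachability
      refine ⟨fun s => s ∉ F, fun _ => True, ?_, ?_, ?_, ?_⟩
      · rintro π ⟨i, h⟩; exact ⟨i, not_not.mp h⟩
      · rintro π k ⟨i, hi⟩ hG
        have hk : k ≤ i := by
          by_contra h
          exact hG i (by omega) hi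
        exact ⟨i - k, by show π (i - k + k) ∈ F; rw [show i - k + k = i by omega]; exact hi⟩
      · rintro π k _ ⟨n, hn⟩; exact ⟨n + k, hn⟩
      · intro _ _; trivial
    · -- Büchi
      refine ⟨fun _ => True, fun _ => True, ?_, ?_, ?_, ?_⟩
      · rintro π ⟨i, h⟩; exact absurd trivial h
      · intro π k h _ i
        obtain ⟨j, hj, hjF⟩ := h (i + k)
        exact ⟨j - k, by omega, by show π (j - k + k) ∈ F; rw [show j - k + k = j by omega]; exact hjF⟩
      · intro π k _ h i
        obtain ⟨j, hj, hjF⟩ := h i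
        exact ⟨j + k, by omega, hjF⟩
      · intro _ _; trivial
    · -- parity
      refine ⟨fun _ => True, fun _ => True, ?_, ?_, ?_, ?_⟩
      · rintro π ⟨i, h⟩; exact absurd trivial h
      · rintro π k ⟨s, hs, he, hmax⟩ _
        refine ⟨s, fun i => ?_, he, fun t ht => hmax t (fun i => ?_)⟩
        · obtain ⟨j, hj, e⟩ := hs (i + k)
          exact ⟨j - k, by omega, by show π (j - k + k) = _; rw [show j - k + k = j by omega]; exact e⟩
        · obtain ⟨j, hj, e⟩ := ht i
          exact ⟨j + k, by omega, e⟩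
      · rintro π k _ ⟨s, hs, he, hmax⟩
        refine ⟨s, fun i => ?_, he, fun t ht => ?_⟩
        · obtain ⟨j, hj, e⟩ := hs i
          exact ⟨j + k, by omega, e⟩
        · refine hmax t (fun i => ?_)
          obtain ⟨j, hj, e⟩ := ht (i + k)
          exact ⟨j - k, by omega, by show π (j - k + k) = _; rw [show j - k + k = j by omega]; exact e⟩
      · intro _ _; trivial
  obtain ⟨G, P, A1, A2, A3, A4⟩ := key
  have h2 : Wins tr (C ∪ (B ∩ Delta tr Ω C B)) Ω init :=
    main_core A1 A2 A3 A4 hlose B.ncard B rfl hwin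
  refine ⟨?_, h2⟩
  by_contra hne
  rw [Set.not_nonempty_iff_eq_empty] at hne
  have hbe : B ∩ Delta tr Ω C B = ∅ := by rw [Set.inter_comm]; exact hne
  rw [hbe, Set.union_empty] at h2
  exact hlose h2
end

section
/- For a reachability objective, if (B, C) is a block-switching pair then the frontier Fr(B, C) is nonempty: some state in B ∩ Δ has a transition leaving Δ = Win(G[C ∪ B]) \ Win(G[C]). -/
open Classical


noncomputable section AttrAux

variable {S : Type*}

/-- Attractor levels for player Sat controlling `D`, target `F`. -/
def attrA (tr : S → S → Prop) (F D : Set S) : ℕ → Set S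
  | 0 => F
  | n+1 => attrA tr F D n ∪ {s | (s ∈ D ∧ ∃ t, tr s t ∧ t ∈ attrA tr F D n) ∨
      (s ∉ D ∧ ∀ t, tr s t → t ∈ attrA tr F D n)}

lemma attrA_mono (tr : S → S → Prop) (F D : Set S) : Monotone (attrA tr F D) :=
  monotone_nat_of_le_succ fun n => by
    intro s hs; exact Or.inl hs

/-- The full attractor. -/
def attrFull (tr : S → S → Prop) (F D : Set S) : Set S :=
  {s | ∃ n, s ∈ attrA tr F D n}

lemma attr_bound [Fintype S] (tr : S → S → Prop) (F D : Set S) :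
    ∃ N, attrFull tr F D ⊆ attrA tr F D N := by
  classical
  set f : S → ℕ := fun s => if h : s ∈ attrFull tr F D then h.choose else 0 with hf
  refine ⟨Finset.univ.sup f, ?_⟩
  intro s hs
  have h1 : s ∈ attrA tr F D (f s) := by
    simp only [hf, dif_pos hs]; exact hs.choose_spec
  exact attrA_mono tr F D (Finset.le_sup (Finset.mem_univ s)) h1

/-- levels are determined: if s is at level n+1 but not n, that n is unique. -/
lemma attr_level_unique (tr : S → S → Prop) (F D : Set S) {s : S} {n m : ℕ}
    (h1 : s ∈ attrA tr F D (n+1)) (h2 : s ∉ attrA tr F D n)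
    (h3 : s ∈ attrA tr F D (m+1)) (h4 : s ∉ attrA tr F D m) : n = m := by
  by_contra hne
  rcases Nat.lt_or_ge n m with h | h
  · exact h4 (attrA_mono tr F D h h1)
  · rcases Nat.lt_or_ge m n with h' | h'
    · exact h2 (attrA_mono tr F D h' h3)
    · exact hne (le_antisymm h' h)

/-- The uniform attractor strategy. -/
def attrStrat (tr : S → S → Prop) (htotal : ∀ s, ∃ t, tr s t) (F D : Set S) : S → S :=
  fun s =>
    if h : ∃ t, tr s t ∧ ∃ n, s ∈ attrA tr F D (n+1) ∧ s ∉ attrA tr F D n ∧ t ∈ attrA tr F D n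
    then h.choose else (htotal s).choose

lemma attrStrat_tr (tr : S → S → Prop) (htotal : ∀ s, ∃ t, tr s t) (F D : Set S) (s : S) :
    tr s (attrStrat tr htotal F D s) := by
  unfold attrStrat
  split
  · next h => exact h.choose_spec.1
  · exact (htotal s).choose_spec

lemma attrStrat_step (tr : S → S → Prop) (htotal : ∀ s, ∃ t, tr s t) (F D : Set S)
    {s : S} {n : ℕ} (h1 : s ∈ attrA tr F D (n+1)) (h2 : s ∉ attrA tr F D n)
    (hD : s ∈ D) (ht : ∃ t, tr s t ∧ t ∈ attrA tr F D n) :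
    attrStrat tr htotal F D s ∈ attrA tr F D n := by
  unfold attrStrat
  have hex : ∃ t, tr s t ∧ ∃ m, s ∈ attrA tr F D (m+1) ∧ s ∉ attrA tr F D m ∧
      t ∈ attrA tr F D m := by
    obtain ⟨t, htr, htm⟩ := ht
    exact ⟨t, htr, n, h1, h2, htm⟩
  rw [dif_pos hex]
  obtain ⟨htr, m, hm1, hm2, hm3⟩ := hex.choose_spec
  have : m = n := attr_level_unique tr F D hm1 hm2 h1 h2
  rwa [this] at hm3

/-- Any play from the attractor consistent with the attractor strategy reaches F. -/
lemma attr_play_reach (tr : S → S → Prop) (htotal : ∀ s, ∃ t, tr s t) (F D : Set S) :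
    ∀ n (π : ℕ → S), π 0 ∈ attrA tr F D n →
      (∀ i, tr (π i) (π (i+1)) ∧ (π i ∈ D → π (i+1) = attrStrat tr htotal F D (π i))) →
      ∃ i, π i ∈ F := by
  intro n
  induction n with
  | zero => intro π h0 _; exact ⟨0, h0⟩
  | succ n ih =>
    intro π h0 hcons
    by_cases hn : π 0 ∈ attrA tr F D n
    · exact ih π hn hcons
    · have hshift : ∀ i, tr ((fun i => π (i+1)) i) ((fun i => π (i+1)) (i+1)) ∧
          ((fun i => π (i+1)) i ∈ D →
            (fun i => π (i+1)) (i+1) = attrStrat tr htotal F D ((fun i => π (i+1)) i)) := by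
        intro i; exact hcons (i+1)
      have h1 : π 1 ∈ attrA tr F D n := by
        rcases h0 with h | h
        · exact absurd h hn
        · rcases h with ⟨hD, ht⟩ | ⟨hD, hall⟩
          · have := (hcons 0).2 hD
            rw [this]
            exact attrStrat_step tr htotal F D (Or.inr (Or.inl ⟨hD, ht⟩)) hn hD ht
          · exact hall _ (hcons 0).1
      obtain ⟨i, hi⟩ := ih (fun i => π (i+1)) h1 hshift
      exact ⟨i+1, hi⟩

lemma attr_subset_winset (tr : S → S → Prop) (htotal : ∀ s, ∃ t, tr s t) (F D : Set S) :
    attrFull tr F D ⊆ WinSet tr D (ReachObj F) := by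
  rintro s ⟨n, hn⟩
  refine ⟨attrStrat tr htotal F D, attrStrat_tr tr htotal F D, ?_⟩
  intro π h0 hcons
  exact attr_play_reach tr htotal F D n π (h0 ▸ hn) hcons

lemma winset_subset_attr [Fintype S] (tr : S → S → Prop) (F D : Set S) :
    WinSet tr D (ReachObj F) ⊆ attrFull tr F D := by
  intro s hs
  by_contra hsA
  obtain ⟨σ, hσtr, hσwin⟩ := hs
  obtain ⟨N, hN⟩ := attr_bound tr F D
  -- from any state outside the attractor there is a move staying outside,
  -- respecting σ on D
  have key : ∀ t : S, t ∉ attrFull tr F D →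
      ∃ t', tr t t' ∧ t' ∉ attrFull tr F D ∧ (t ∈ D → t' = σ t) := by
    intro t ht
    by_cases hD : t ∈ D
    · refine ⟨σ t, hσtr t, ?_, fun _ => rfl⟩
      intro ⟨n, hn⟩
      exact ht ⟨n+1, Or.inr (Or.inl ⟨hD, σ t, hσtr t, hn⟩)⟩
    · by_contra hno
      push_neg at hno
      have hall : ∀ t', tr t t' → t' ∈ attrA tr F D N := by
        intro t' htr'
        refine hN ?_
        by_contra h'
        exact hD (hno t' htr' h').1
      exact ht ⟨N+1, Or.inr (Or.inr ⟨hD, hall⟩)⟩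
  -- build the escaping play
  let step : {t : S // t ∉ attrFull tr F D} → {t : S // t ∉ attrFull tr F D} :=
    fun t => ⟨(key t.1 t.2).choose, (key t.1 t.2).choose_spec.2.1⟩
  let pth : ℕ → {t : S // t ∉ attrFull tr F D} := fun i => step^[i] ⟨s, hsA⟩
  have hpth_succ : ∀ i, pth (i+1) = step (pth i) := by
    intro i; simp [pth, Function.iterate_succ_apply']
  have hcons : ∀ i, tr ((fun i => (pth i).1) i) ((fun i => (pth i).1) (i+1)) ∧
      ((fun i => (pth i).1) i ∈ D →
        (fun i => (pth i).1) (i+1) = σ ((fun i => (pth i).1) i)) := by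
    intro i
    have h := (key (pth i).1 (pth i).2).choose_spec
    constructor
    · simp only [hpth_succ i]; exact h.1
    · intro hD; simp only [hpth_succ i]; exact h.2.2 hD
  have h0 : (fun i => (pth i).1) 0 = s := rfl
  obtain ⟨i, hi⟩ := hσwin (fun i => (pth i).1) h0 hcons
  exact (pth i).2 ⟨0, hi⟩

lemma winset_eq_attr [Fintype S] (tr : S → S → Prop) (htotal : ∀ s, ∃ t, tr s t)
    (F D : Set S) : WinSet tr D (ReachObj F) = attrFull tr F D :=
  le_antisymm (winset_subset_attr tr F D) (attr_subset_winset tr htotal F D)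

end AttrAux

/-- For reachability objectives, the frontier of a block-switching pair is nonempty. -/
theorem frontier_nonempty_reach {S : Type*} [Fintype S]
    (tr : S → S → Prop) (htotal : ∀ s, ∃ t, tr s t)
    (F : Set S) (init : S)
    (hreach : ∃ (π : ℕ → S) (n : ℕ), π 0 = init ∧ (∀ i, tr (π i) (π (i + 1))) ∧ π n ∈ F)
    (B C : Set S)
    (hwin : Wins tr (C ∪ B) (ReachObj F) init)
    (hlose : ¬Wins tr C (ReachObj F) init) :
    (Frontier tr (ReachObj F) C B).Nonempty := by
  classical
  by_contra hemp
  rw [Set.not_nonempty_iff_eq_empty] at hemp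
  have hfe : ∀ s, s ∈ Delta tr (ReachObj F) C B → s ∈ B →
      ∀ t, tr s t → t ∈ Delta tr (ReachObj F) C B := by
    intro s hΔ hB t htr
    by_contra ht
    have : s ∈ Frontier tr (ReachObj F) C B := ⟨⟨hΔ, hB⟩, t, htr, ht⟩
    simp [hemp] at this
  have hWD := winset_eq_attr tr htotal F (C ∪ B)
  have hWC := winset_eq_attr tr htotal F C
  obtain ⟨N, hN⟩ := attr_bound tr F C
  have hΔeq : Delta tr (ReachObj F) C B = attrFull tr F (C ∪ B) \ attrFull tr F C := by
    unfold Delta; rw [hWD, hWC]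
  have main : ∀ n, attrA tr F (C ∪ B) n ⊆ attrFull tr F C := by
    intro n
    induction n with
    | zero => intro s hs; exact ⟨0, hs⟩
    | succ n ih =>
      intro s hs
      rcases hs with hs | hs
      · exact ih hs
      rcases hs with ⟨hD, t, htr, ht⟩ | ⟨hD, hall⟩
      · have htC : t ∈ attrFull tr F C := ih ht
        rcases hD with hC | hB
        · exact ⟨N+1, Or.inr (Or.inl ⟨hC, t, htr, hN htC⟩)⟩
        · by_contra hsC
          have hsΔ : s ∈ Delta tr (ReachObj F) C B := by
            rw [hΔeq]
            exact ⟨⟨n+1, Or.inr (Or.inl ⟨Or.inr hB, t, htr, ht⟩)⟩, hsC⟩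
          have h2 := hfe s hsΔ hB t htr
          rw [hΔeq] at h2
          exact h2.2 htC
      · have hsC : s ∉ C := fun h => hD (Or.inl h)
        exact ⟨N+1, Or.inr (Or.inr ⟨hsC, fun t htr => hN (ih (hall t htr))⟩)⟩
  have hinit : init ∈ attrFull tr F (C ∪ B) := by rw [← hWD]; exact hwin
  obtain ⟨n, hn⟩ := hinit
  have : init ∈ WinSet tr C (ReachObj F) := by rw [hWC]; exact main n hn
  exact hlose this
end

section
/- The forward reachability positivity problem reduces in polynomial time to the backward pessimistic positivity problem: adding a fresh initial state s_init' with transitions to the old initial state s_init and to a fresh sink s_¬F (with a self-loop, not in F), and taking the violating run ρ = s_init' (s_¬F)^ω, a state s has positive pessimistic backward responsibility in the new system iff it has positive forward responsibility in the original; concretely (C, s) is a forward switching pair iff (C ∪ {s_init'}, s) is a backward pessimistic switching pair. -/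
/-- The extended transition relation of the reduction: a fresh initial state
`Sum.inr true` with transitions to the old initial state and to a fresh sink
`Sum.inr false`, which has only a self-loop. -/
def ExtTr {S : Type*} (tr : S → S → Prop) (init : S) : S ⊕ Bool → S ⊕ Bool → Prop
  | Sum.inl a, Sum.inl b => tr a b
  | Sum.inr true, Sum.inl b => b = init
  | Sum.inr true, Sum.inr b => b = false
  | Sum.inr false, Sum.inr b => b = false
  | _, _ => False

/-- The violating run `ρ = s_init' (s_¬F)ʷ` of the reduction. -/
def ExtRun (S : Type*) : ℕ → S ⊕ Bool := fun n => if n = 0 then Sum.inr true else Sum.inr false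

namespace FwdBack

variable {S : Type*}

lemma inl_not_range (a : S) : Sum.inl a ∉ Set.range (ExtRun S) := by
  rintro ⟨n, hn⟩
  by_cases h : n = 0 <;> simp [ExtRun, h] at hn

lemma extRun_succ (n : ℕ) : ExtRun S (n + 1) = Sum.inr false := by
  simp [ExtRun]

lemma edge_inl {tr : S → S → Prop} {init : S} {D : Set (S ⊕ Bool)} {a : S} {t : S ⊕ Bool} :
    Engrave (ExtTr tr init) (ExtRun S) D (Sum.inl a) t ↔ ∃ b, t = Sum.inl b ∧ tr a b := by
  constructor
  · rintro (⟨h, -⟩ | ⟨i, hi, -, -⟩)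
    · cases t with
      | inl b => exact ⟨b, rfl, h⟩
      | inr b => exact h.elim
    · exact absurd ⟨i, hi⟩ (inl_not_range a)
  · rintro ⟨b, rfl, h⟩
    exact Or.inl ⟨h, fun hc => inl_not_range a hc.1⟩

lemma edge_false {tr : S → S → Prop} {init : S} {D : Set (S ⊕ Bool)} {t : S ⊕ Bool}
    (h : Engrave (ExtTr tr init) (ExtRun S) D (Sum.inr false) t) : t = Sum.inr false := by
  rcases h with ⟨h, -⟩ | ⟨i, hi, ht, -⟩
  · cases t with
    | inl b => exact h.elim
    | inr b => rw [show b = false from h]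
  · by_cases h0 : i = 0
    · subst h0; simp [ExtRun] at hi
    · rw [← ht, extRun_succ]

lemma false_loop {tr : S → S → Prop} {init : S} (D : Set (S ⊕ Bool)) :
    Engrave (ExtTr tr init) (ExtRun S) D (Sum.inr false) (Sum.inr false) := by
  by_cases h : Sum.inr false ∈ D
  · exact Or.inl ⟨rfl, fun hc => hc.2 h⟩
  · exact Or.inr ⟨1, extRun_succ 0, extRun_succ 1, h⟩

lemma edge_true {tr : S → S → Prop} {init : S} {D : Set (S ⊕ Bool)} {t : S ⊕ Bool}
    (hD : Sum.inr true ∈ D)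
    (h : Engrave (ExtTr tr init) (ExtRun S) D (Sum.inr true) t) :
    t = Sum.inl init ∨ t = Sum.inr false := by
  rcases h with ⟨h, -⟩ | ⟨-, -, -, hc⟩
  · cases t with
    | inl b => exact Or.inl (by rw [show b = init from h])
    | inr b => exact Or.inr (by rw [show b = false from h])
  · exact absurd hD hc

lemma edge_true_inl {tr : S → S → Prop} {init : S} {D : Set (S ⊕ Bool)}
    (hD : Sum.inr true ∈ D) :
    Engrave (ExtTr tr init) (ExtRun S) D (Sum.inr true) (Sum.inl init) :=
  Or.inl ⟨rfl, fun hc => hc.2 hD⟩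

/-- If Sat either doesn't control `inr true` or moves from it to the sink,
the extended objective fails. -/
lemma no_reach {tr : S → S → Prop} {init : S} {F : Set S} {D : Set (S ⊕ Bool)}
    {σ : S ⊕ Bool → S ⊕ Bool}
    (hσ : ∀ x, Engrave (ExtTr tr init) (ExtRun S) D x (σ x))
    (hwin : ∀ π : ℕ → S ⊕ Bool, π 0 = Sum.inr true →
      (∀ i, Engrave (ExtTr tr init) (ExtRun S) D (π i) (π (i + 1)) ∧
        (π i ∈ D → π (i + 1) = σ (π i))) → ReachObj (Sum.inl '' F) π)
    (h : Sum.inr true ∈ D → σ (Sum.inr true) = Sum.inr false) : False := by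
  have hsf : σ (Sum.inr false) = Sum.inr false := edge_false (hσ _)
  have hcons : ∀ i, Engrave (ExtTr tr init) (ExtRun S) D (ExtRun S i) (ExtRun S (i + 1)) ∧
      (ExtRun S i ∈ D → ExtRun S (i + 1) = σ (ExtRun S i)) := by
    intro i
    cases i with
    | zero =>
      refine ⟨?_, fun hm => ?_⟩
      · by_cases hD : Sum.inr true ∈ D
        · exact Or.inl (by rw [show ExtRun S 0 = Sum.inr true from rfl, extRun_succ]; exact ⟨rfl, fun hc => hc.2 hD⟩)
        · exact Or.inr ⟨0, rfl, rfl, by rwa [show ExtRun S 0 = Sum.inr true from rfl]⟩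
      · rw [show ExtRun S 0 = Sum.inr true from rfl] at hm ⊢
        rw [extRun_succ, h hm]
    | succ k =>
      rw [extRun_succ, extRun_succ]
      exact ⟨false_loop D, fun _ => hsf.symm⟩
  obtain ⟨i, x, -, hx⟩ := hwin (ExtRun S) rfl hcons
  by_cases h0 : i = 0 <;> simp [ExtRun, h0] at hx

/-- Key equivalence: if Sat controls `inr true`, the extended engraved game is
equivalent to the original game with control `inl ⁻¹' D`. -/
lemma wins_ext_iff {tr : S → S → Prop} {init : S} {F : Set S} {D : Set (S ⊕ Bool)}
    (hD : Sum.inr true ∈ D) :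
    Wins (Engrave (ExtTr tr init) (ExtRun S) D) D (ReachObj (Sum.inl '' F)) (Sum.inr true) ↔
      Wins tr (Sum.inl ⁻¹' D) (ReachObj F) init := by
  constructor
  · rintro ⟨σ', hσ', hwin'⟩
    -- σ' must go to inl init from inr true
    have hst : σ' (Sum.inr true) = Sum.inl init := by
      rcases edge_true hD (hσ' (Sum.inr true)) with h | h
      · exact h
      · exact (no_reach hσ' hwin' (fun _ => h)).elim
    have hchoice : ∀ a : S, ∃ b, σ' (Sum.inl a) = Sum.inl b ∧ tr a b :=
      fun a => edge_inl.1 (hσ' (Sum.inl a))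
    choose σ hσeq htr using hchoice
    refine ⟨σ, htr, fun π hπ0 hcons => ?_⟩
    set π' : ℕ → S ⊕ Bool := fun n => match n with
      | 0 => Sum.inr true
      | Nat.succ k => Sum.inl (π k) with hπ'
    have hcons' : ∀ i, Engrave (ExtTr tr init) (ExtRun S) D (π' i) (π' (i + 1)) ∧
        (π' i ∈ D → π' (i + 1) = σ' (π' i)) := by
      intro i
      cases i with
      | zero =>
        refine ⟨?_, fun _ => ?_⟩
        · show Engrave (ExtTr tr init) (ExtRun S) D (Sum.inr true) (Sum.inl (π 0))
          rw [hπ0]; exact edge_true_inl hD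
        · show Sum.inl (π 0) = σ' (Sum.inr true)
          rw [hπ0, hst]
      | succ k =>
        refine ⟨edge_inl.2 ⟨π (k + 1), rfl, (hcons k).1⟩, fun hm => ?_⟩
        show Sum.inl (π (k + 1)) = σ' (Sum.inl (π k))
        rw [hσeq, (hcons k).2 hm]
    obtain ⟨i, x, hxF, hx⟩ := hwin' π' rfl hcons'
    cases i with
    | zero => exact (Sum.inl_ne_inr hx).elim
    | succ k =>
      exact ⟨k, Sum.inl_injective hx ▸ hxF⟩
  · rintro ⟨σ, hσ, hwin⟩
    set σ' : S ⊕ Bool → S ⊕ Bool := fun x => match x with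
      | Sum.inl a => Sum.inl (σ a)
      | Sum.inr true => Sum.inl init
      | Sum.inr false => Sum.inr false with hσ'def
    have hσ' : ∀ x, Engrave (ExtTr tr init) (ExtRun S) D x (σ' x) := by
      rintro (a | b)
      · exact edge_inl.2 ⟨σ a, rfl, hσ a⟩
      · cases b
        · exact false_loop D
        · exact edge_true_inl hD
    refine ⟨σ', hσ', fun π' hπ'0 hcons' => ?_⟩
    set π : ℕ → S := fun n => Sum.elim id (fun _ => init) (π' (n + 1)) with hπdef
    have hinl : ∀ n, π' (n + 1) = Sum.inl (π n) := by
      intro n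
      induction n with
      | zero =>
        have h1 : π' 1 = σ' (π' 0) := (hcons' 0).2 (by rw [hπ'0]; exact hD)
        rw [hπ'0] at h1
        have : π' 1 = Sum.inl init := h1
        rw [hπdef]; simp only [this, Sum.elim_inl, id]
      | succ k ih =>
        have hedge := (hcons' (k + 1)).1
        rw [ih] at hedge
        obtain ⟨b, hb, -⟩ := edge_inl.1 hedge
        rw [hπdef]; simp only [hb, Sum.elim_inl, id]
    have hπ0 : π 0 = init := by
      have h1 : π' 1 = σ' (π' 0) := (hcons' 0).2 (by rw [hπ'0]; exact hD)
      rw [hπ'0] at h1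
      have h2 : π' 1 = Sum.inl init := h1
      have := (hinl 0).symm.trans h2
      rwa [Sum.inl.injEq] at this
    have hcons : ∀ i, tr (π i) (π (i + 1)) ∧ (π i ∈ Sum.inl ⁻¹' D → π (i + 1) = σ (π i)) := by
      intro i
      have hedge := (hcons' (i + 1)).1
      rw [hinl i, hinl (i + 1)] at hedge
      obtain ⟨b, hb, htrb⟩ := edge_inl.1 hedge
      rw [Sum.inl.injEq] at hb
      refine ⟨hb ▸ htrb, fun hm => ?_⟩
      have hctl := (hcons' (i + 1)).2 (by rw [hinl i]; exact hm)
      rw [hinl i, hinl (i + 1)] at hctl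
      have : σ' (Sum.inl (π i)) = Sum.inl (σ (π i)) := rfl
      rw [this, Sum.inl.injEq] at hctl
      exact hctl
    obtain ⟨i, hF⟩ := hwin π hπ0 hcons
    exact ⟨i + 1, π i, hF, (hinl i).symm⟩

end FwdBack

section MainProof

variable {S : Type*}

lemma pre_image_union (C : Set S) :
    Sum.inl ⁻¹' (Sum.inl '' C ∪ {Sum.inr true} : Set (S ⊕ Bool)) = C := by
  ext a; simp

lemma pre_image_union_s (C : Set S) (s : S) :
    Sum.inl ⁻¹' ((Sum.inl '' C ∪ {Sum.inr true}) ∪ {Sum.inl s} : Set (S ⊕ Bool)) = C ∪ {s} := by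
  ext a; simp

lemma pre_union_s (C' : Set (S ⊕ Bool)) (s : S) :
    Sum.inl ⁻¹' (C' ∪ {Sum.inl s}) = Sum.inl ⁻¹' C' ∪ {s} := by
  ext a; simp

end MainProof

/-- The forward reachability positivity problem reduces to the backward pessimistic
positivity problem: `s` has positive forward responsibility in `T` iff it has positive
pessimistic backward responsibility in the extended system `T'` with run
`ρ = s_init' (s_¬F)ʷ`; concretely, `(C, s)` is a forward switching pair iff
`(inl '' C ∪ {s_init'}, inl s)` is a backward pessimistic switching pair. -/
theorem forward_to_backward_pessimistic_reduction {S : Type*} [Fintype S]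
    (tr : S → S → Prop) (htotal : ∀ s, ∃ t, tr s t)
    (init : S) (F : Set S) (s : S) :
    ((∃ C : Set S, s ∉ C ∧
        Wins tr (C ∪ {s}) (ReachObj F) init ∧ ¬Wins tr C (ReachObj F) init) ↔
      (∃ C' : Set (S ⊕ Bool), Sum.inl s ∉ C' ∧
        Wins (Engrave (ExtTr tr init) (ExtRun S) (C' ∪ {Sum.inl s})) (C' ∪ {Sum.inl s})
          (ReachObj (Sum.inl '' F)) (Sum.inr true) ∧
        ¬Wins (Engrave (ExtTr tr init) (ExtRun S) C') C'
          (ReachObj (Sum.inl '' F)) (Sum.inr true))) ∧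
    (∀ C : Set S, s ∉ C →
      ((Wins tr (C ∪ {s}) (ReachObj F) init ∧ ¬Wins tr C (ReachObj F) init) ↔
        (Wins (Engrave (ExtTr tr init) (ExtRun S)
            ((Sum.inl '' C ∪ {Sum.inr true}) ∪ {Sum.inl s}))
            ((Sum.inl '' C ∪ {Sum.inr true}) ∪ {Sum.inl s})
            (ReachObj (Sum.inl '' F)) (Sum.inr true) ∧
         ¬Wins (Engrave (ExtTr tr init) (ExtRun S) (Sum.inl '' C ∪ {Sum.inr true}))
            (Sum.inl '' C ∪ {Sum.inr true})
            (ReachObj (Sum.inl '' F)) (Sum.inr true)))) := by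
  have part2 : ∀ C : Set S, s ∉ C →
      ((Wins tr (C ∪ {s}) (ReachObj F) init ∧ ¬Wins tr C (ReachObj F) init) ↔
        (Wins (Engrave (ExtTr tr init) (ExtRun S)
            ((Sum.inl '' C ∪ {Sum.inr true}) ∪ {Sum.inl s}))
            ((Sum.inl '' C ∪ {Sum.inr true}) ∪ {Sum.inl s})
            (ReachObj (Sum.inl '' F)) (Sum.inr true) ∧
         ¬Wins (Engrave (ExtTr tr init) (ExtRun S) (Sum.inl '' C ∪ {Sum.inr true}))
            (Sum.inl '' C ∪ {Sum.inr true})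
            (ReachObj (Sum.inl '' F)) (Sum.inr true))) := by
    intro C _
    have m1 : (Sum.inr true : S ⊕ Bool) ∈ (Sum.inl '' C ∪ {Sum.inr true}) ∪ {Sum.inl s} :=
      Or.inl (Or.inr rfl)
    have m2 : (Sum.inr true : S ⊕ Bool) ∈ Sum.inl '' C ∪ {Sum.inr true} := Or.inr rfl
    rw [FwdBack.wins_ext_iff m1, FwdBack.wins_ext_iff m2, pre_image_union_s, pre_image_union]
  refine ⟨⟨?_, ?_⟩, part2⟩
  · rintro ⟨C, hsC, hw, hnw⟩
    refine ⟨Sum.inl '' C ∪ {Sum.inr true}, ?_, ?_⟩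
    · rintro (h | h)
      · obtain ⟨a, haC, ha⟩ := h
        rw [Sum.inl.injEq] at ha
        exact hsC (ha ▸ haC)
      · simp at h
    · exact (part2 C hsC).mp ⟨hw, hnw⟩
  · rintro ⟨C', hs', hw', hnw'⟩
    have hmem : (Sum.inr true : S ⊕ Bool) ∈ C' := by
      by_contra h
      have hnot : (Sum.inr true : S ⊕ Bool) ∉ C' ∪ {Sum.inl s} := by
        rintro (h' | h')
        · exact h h'
        · simp at h'
      obtain ⟨σ, hσ, hwin⟩ := hw'
      exact FwdBack.no_reach hσ hwin (fun hm => absurd hm hnot)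
    refine ⟨Sum.inl ⁻¹' C', hs', ?_, ?_⟩
    · have := (FwdBack.wins_ext_iff (Or.inl hmem : (Sum.inr true : S ⊕ Bool) ∈ C' ∪ {Sum.inl s})).mp hw'
      rwa [pre_union_s] at this
    · intro hw
      exact hnw' ((FwdBack.wins_ext_iff hmem).mpr hw)
end
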